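/- arXiv:1510.04072 — 2 statements merged into one kernel-verified Lean document; each statement's English description precedes it below -/
import Mathlib

section
/- Let S be a good semigroup and K ∈ 𝔊_S. Then the following are equivalent: (i) K is a canonical ideal of S; (ii) there exists α ∈ ℤ^I such that α + K = K^0_S; (iii) K − (K − E) = E for all E ∈ 𝔊_S. -/
namespace GoodSemigroup

variable {I : Type*}

/-- Property (E1): closedness under componentwise minimum. -/
def SatE1 (E : Set (I → ℤ)) : Prop := ∀ a ∈ E, ∀ b ∈ E, a ⊓ b ∈ E

/-- Property (E2). -/
def SatE2 (E : Set (I → ℤ)) : Prop :=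
  ∀ a ∈ E, ∀ b ∈ E, ∀ j : I, a j = b j →
    ∃ ε ∈ E, a j < ε j ∧ (∀ i : I, i ≠ j → min (a i) (b i) ≤ ε i) ∧
      ∀ i : I, i ≠ j → a i ≠ b i → ε i = min (a i) (b i)

/-- A good semigroup `S ⊆ ℤ^I`. -/
def IsGood (S : Set (I → ℤ)) : Prop :=
  (0 : I → ℤ) ∈ S ∧ (∀ a ∈ S, ∀ b ∈ S, a + b ∈ S) ∧ (∀ a ∈ S, 0 ≤ a) ∧
  (∃ α : I → ℤ, ∀ β : I → ℤ, 0 ≤ β → α + β ∈ S) ∧ SatE1 S ∧ SatE2 S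

/-- A semigroup ideal of `S`. -/
def IsIdeal (S E : Set (I → ℤ)) : Prop :=
  E.Nonempty ∧ (∀ a ∈ E, ∀ s ∈ S, a + s ∈ E) ∧ ∃ α ∈ S, ∀ a ∈ E, α + a ∈ S

/-- A good semigroup ideal of `S`. -/
def IsGoodIdeal (S E : Set (I → ℤ)) : Prop := IsIdeal S E ∧ SatE1 E ∧ SatE2 E

/-- The difference `E − F = {α | α + F ⊆ E}`. -/
def sub (E F : Set (I → ℤ)) : Set (I → ℤ) := {α | ∀ f ∈ F, α + f ∈ E}

/-- The conductor ideal `C_E = E − ℕ^I`. -/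
def cond (E : Set (I → ℤ)) : Set (I → ℤ) := sub E {β : I → ℤ | 0 ≤ β}

/-- `Δ_J(α)`. -/
def deltaJ (J : Set I) (α : I → ℤ) : Set (I → ℤ) :=
  {β | (∀ j ∈ J, β j = α j) ∧ ∀ i ∉ J, α i < β i}

/-- `Δ(α) = ⋃_i Δ_{i}(α)`. -/
def delta (α : I → ℤ) : Set (I → ℤ) := ⋃ i : I, deltaJ {i} α

/-- The normalized canonical ideal `K⁰_S = {α | Δ^S(τ − α) = ∅}` (with `τ` a parameter). -/
def K0 (S : Set (I → ℤ)) (τ : I → ℤ) : Set (I → ℤ) := {α | delta (τ - α) ∩ S = ∅}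

/-- `a` and `b` are consecutive elements of `E`. -/
def Consecutive (E : Set (I → ℤ)) (a b : I → ℤ) : Prop :=
  a ∈ E ∧ b ∈ E ∧ a < b ∧ ∀ c ∈ E, ¬(a < c ∧ c < b)

/-- A saturated chain in `E` of length `n` from `a` to `b`. -/
def SaturatedChain (E : Set (I → ℤ)) (n : ℕ) (c : Fin (n + 1) → I → ℤ)
    (a b : I → ℤ) : Prop :=
  c 0 = a ∧ c (Fin.last n) = b ∧ ∀ i : Fin n, Consecutive E (c i.castSucc) (c i.succ)

/-- Property (E4): any two saturated chains with the same endpoints have the same length. -/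
def SatE4 (E : Set (I → ℤ)) : Prop :=
  ∀ a ∈ E, ∀ b ∈ E, ∀ n m : ℕ, ∀ c c',
    SaturatedChain E n c a b → SaturatedChain E m c' a b → n = m

/-- `K ∈ 𝔊_S` is a canonical ideal of `S` if `K ⊆ E` and `γ^K = γ^E` imply `K = E`
for all `E ∈ 𝔊_S`. -/
def IsCanonicalIdeal (S K : Set (I → ℤ)) : Prop :=
  IsGoodIdeal S K ∧ ∀ E γ, IsGoodIdeal S E → K ⊆ E →
    IsLeast (cond K) γ → IsLeast (cond E) γ → K = E

end GoodSemigroup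

open GoodSemigroup
namespace CanAux

open GoodSemigroup

variable {I : Type*}

/-- The dual of `E` with respect to parameter `τ`. -/
def DD (τ : I → ℤ) (E : Set (I → ℤ)) : Set (I → ℤ) := {α | delta (τ - α) ∩ E = ∅}

lemma K0_eq_DD (S : Set (I → ℤ)) (τ : I → ℤ) : K0 S τ = DD τ S := rfl

lemma mem_delta {β y : I → ℤ} :
    y ∈ delta β ↔ ∃ i, y i = β i ∧ ∀ j, j ≠ i → β j < y j := by
  constructor
  · rintro hy
    rcases Set.mem_iUnion.1 hy with ⟨i, h1, h2⟩
    exact ⟨i, h1 i rfl, fun j hj => h2 j hj⟩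
  · rintro ⟨i, h1, h2⟩
    exact Set.mem_iUnion.2 ⟨i, fun j hj => by rw [hj]; exact h1, fun j hj => h2 j hj⟩

lemma mem_DD {τ : I → ℤ} {E : Set (I → ℤ)} {α : I → ℤ} :
    α ∈ DD τ E ↔ ∀ e ∈ E, ∀ i, e i = τ i - α i → ∃ j, j ≠ i ∧ e j ≤ τ j - α j := by
  constructor
  · intro h e he i hi
    by_contra hc
    push_neg at hc
    have : e ∈ delta (τ - α) ∩ E := by
      refine ⟨mem_delta.2 ⟨i, by simpa using hi, fun j hj => ?_⟩, he⟩
      simpa using hc j hj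
    rw [DD] at h
    simp only [Set.mem_setOf_eq] at h
    rw [h] at this
    exact this
  · intro h
    rw [DD, Set.mem_setOf_eq, Set.eq_empty_iff_forall_notMem]
    rintro y ⟨hyd, hyE⟩
    rcases mem_delta.1 hyd with ⟨i, h1, h2⟩
    rcases h y hyE i (by simpa using h1) with ⟨j, hj, hle⟩
    exact absurd (by simpa using h2 j hj) (not_lt.2 hle)

lemma not_mem_DD {τ : I → ℤ} {E : Set (I → ℤ)} {α : I → ℤ}
    (e : I → ℤ) (he : e ∈ E) (i : I) (hi : e i = τ i - α i)
    (hgt : ∀ j, j ≠ i → τ j - α j < e j) : α ∉ DD τ E := by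
  intro h
  rcases mem_DD.1 h e he i hi with ⟨j, hj, hle⟩
  exact absurd (hgt j hj) (not_lt.2 hle)

lemma mem_cond {E : Set (I → ℤ)} {z : I → ℤ} :
    z ∈ cond E ↔ ∀ n : I → ℤ, 0 ≤ n → z + n ∈ E := Iff.rfl

lemma cond_subset {E : Set (I → ℤ)} : cond E ⊆ E := fun z hz => by
  simpa using (mem_cond.1 hz 0 le_rfl)

end CanAux
namespace CanAux

open GoodSemigroup

variable {I : Type*}

section Least

variable [Fintype I] [Nonempty I]

omit [Nonempty I] in
lemma exists_least {B : Set (I → ℤ)} (hne : B.Nonempty)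
    (hmin : ∀ a ∈ B, ∀ b ∈ B, (fun i => min (a i) (b i)) ∈ B)
    (hbdd : ∃ lb : I → ℤ, ∀ b ∈ B, lb ≤ b) : ∃ m, IsLeast B m := by
  classical
  obtain ⟨lb, hlb⟩ := hbdd
  -- coordinatewise minima with witnesses
  have hcoord : ∀ i : I, ∃ w ∈ B, ∀ b ∈ B, w i ≤ b i := by
    intro i
    have h1 : ∃ z : ℤ, (∃ b ∈ B, b i = z) := ⟨hne.choose i, hne.choose, hne.choose_spec, rfl⟩
    have h2 : ∃ c : ℤ, ∀ z : ℤ, (∃ b ∈ B, b i = z) → c ≤ z := by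
      refine ⟨lb i, ?_⟩
      rintro z ⟨b, hb, rfl⟩
      exact hlb b hb i
    obtain ⟨z0, ⟨b0, hb0, hb0i⟩, hz0⟩ := Int.exists_least_of_bdd h2 h1
    exact ⟨b0, hb0, fun b hb => by rw [hb0i]; exact hz0 (b i) ⟨b, hb, rfl⟩⟩
  choose w hwB hwle using hcoord
  have key : ∀ s : Finset I, ∃ v ∈ B, ∀ i ∈ s, ∀ b ∈ B, v i ≤ b i := by
    intro s
    induction s using Finset.induction_on with
    | empty => exact ⟨hne.choose, hne.choose_spec, by simp⟩
    | @insert i s his ih =>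
      obtain ⟨v, hvB, hv⟩ := ih
      refine ⟨fun k => min (v k) (w i k), hmin v hvB (w i) (hwB i), ?_⟩
      intro k hk b hb
      rcases Finset.mem_insert.1 hk with rfl | hk
      · exact le_trans (min_le_right _ _) (hwle k b hb)
      · exact le_trans (min_le_left _ _) (hv k hk b hb)
  obtain ⟨v, hvB, hv⟩ := key Finset.univ
  exact ⟨v, hvB, fun b hb i => hv i (Finset.mem_univ i) b hb⟩

end Least

section Ideal

variable {S : Set (I → ℤ)}

lemma ideal_bddBelow {E : Set (I → ℤ)} (hS : IsGood S) (hE : IsIdeal S E) :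
    ∃ lb : I → ℤ, ∀ e ∈ E, lb ≤ e := by
  obtain ⟨α, hαS, hα⟩ := hE.2.2
  refine ⟨-α, fun e he i => ?_⟩
  have := hS.2.2.1 _ (hα e he) i
  simp only [Pi.zero_apply, Pi.add_apply] at this
  simp only [Pi.neg_apply]
  linarith

lemma goodIdeal_exists_least [Fintype I] [Nonempty I] {E : Set (I → ℤ)}
    (hS : IsGood S) (hE : IsGoodIdeal S E) : ∃ m, IsLeast E m := by
  refine exists_least hE.1.1 ?_ (ideal_bddBelow hS hE.1)
  intro a ha b hb
  have := hE.2.1 a ha b hb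
  convert this using 1
  funext i; rfl

/-- the conductor ideal of a good ideal has a least element -/
lemma goodIdeal_cond_least [Fintype I] [Nonempty I] {E : Set (I → ℤ)}
    (hS : IsGood S) (γS : I → ℤ) (hγS : IsLeast (cond S) γS)
    (hE : IsGoodIdeal S E) : ∃ g, IsLeast (cond E) g := by
  refine exists_least ?_ ?_ ?_
  · obtain ⟨e, he⟩ := hE.1.1
    refine ⟨e + γS, mem_cond.2 fun n hn => ?_⟩
    have : γS + n ∈ S := mem_cond.1 hγS.1 n hn
    have := hE.1.2.1 e he _ this
    convert this using 1
    abel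
  · -- min-closed
    intro z1 h1 z2 h2
    refine mem_cond.2 fun n hn => ?_
    have ha : (z1 + fun i => max (z1 i) (min (z1 i) (z2 i) + n i) - z1 i) ∈ E := by
      refine mem_cond.1 h1 _ fun i => ?_
      simp only [Pi.zero_apply]
      have := le_max_left (z1 i) (min (z1 i) (z2 i) + n i)
      omega
    have hb : (z2 + fun i => max (z2 i) (min (z1 i) (z2 i) + n i) - z2 i) ∈ E := by
      refine mem_cond.1 h2 _ fun i => ?_
      simp only [Pi.zero_apply]
      have := le_max_left (z2 i) (min (z1 i) (z2 i) + n i)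
      omega
    have hmin := hE.2.1 _ ha _ hb
    convert hmin using 1
    funext i
    simp only [Pi.inf_apply, Pi.add_apply]
    have := hn i
    simp only [Pi.zero_apply] at this
    omega
  · obtain ⟨lb, hlb⟩ := ideal_bddBelow hS hE.1
    exact ⟨lb, fun z hz => hlb z (cond_subset hz)⟩

end Ideal

end CanAux
namespace CanAux

open GoodSemigroup

variable {I : Type*}

/-- translation of a set -/
def tr (a : I → ℤ) (A : Set (I → ℤ)) : Set (I → ℤ) := (fun x => a + x) '' A

lemma mem_tr {a : I → ℤ} {A : Set (I → ℤ)} {x : I → ℤ} :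
    x ∈ tr a A ↔ x - a ∈ A := by
  constructor
  · rintro ⟨y, hy, rfl⟩
    simpa using hy
  · intro h
    refine ⟨x - a, h, ?_⟩
    show a + (x - a) = x
    abel

lemma tr_tr (a b : I → ℤ) (A : Set (I → ℤ)) : tr a (tr b A) = tr (a + b) A := by
  ext x
  rw [mem_tr, mem_tr, mem_tr, show x - a - b = x - (a + b) by abel]

lemma tr_zero (A : Set (I → ℤ)) : tr 0 A = A := by
  ext x; rw [mem_tr]; simp

lemma mem_sub {A B : Set (I → ℤ)} {z : I → ℤ} : z ∈ sub A B ↔ ∀ b ∈ B, z + b ∈ A := Iff.rfl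

lemma sub_tr_left (a : I → ℤ) (A B : Set (I → ℤ)) : sub (tr a A) B = tr a (sub A B) := by
  ext z
  rw [mem_tr, mem_sub, mem_sub]
  constructor
  · intro h b hb
    have := mem_tr.1 (h b hb)
    rwa [show z + b - a = z - a + b by abel] at this
  · intro h b hb
    rw [mem_tr, show z + b - a = z - a + b by abel]
    exact h b hb

lemma sub_tr_right (a : I → ℤ) (A B : Set (I → ℤ)) : sub A (tr a B) = tr (-a) (sub A B) := by
  ext z
  rw [mem_tr, mem_sub, mem_sub]
  constructor
  · intro h b hb
    have := h (a + b) (mem_tr.2 (by simpa using hb))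
    rwa [show z + (a + b) = z - -a + b by abel] at this
  · intro h y hy
    have h2 := h (y - a) (mem_tr.1 hy)
    rwa [show z - -a + (y - a) = z + y by abel] at h2

lemma subset_sub_sub {A B : Set (I → ℤ)} : B ⊆ sub A (sub A B) := by
  intro b hb z hz
  have := mem_sub.1 hz b hb
  rwa [add_comm]

/-- `sub K S = K` for an ideal `K` -/
lemma sub_self_S {S K : Set (I → ℤ)} (h0 : (0 : I → ℤ) ∈ S)
    (hadd : ∀ a ∈ K, ∀ s ∈ S, a + s ∈ K) : sub K S = K := by
  ext z
  constructor
  · intro h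
    simpa using mem_sub.1 h 0 h0
  · intro h s hs
    exact hadd z h s hs

/-- translate of a good ideal is a good ideal -/
lemma isGoodIdeal_tr {S K : Set (I → ℤ)} (hS : IsGood S)
    (γS : I → ℤ) (hγS : IsLeast (cond S) γS)
    (hK : IsGoodIdeal S K) (a : I → ℤ) : IsGoodIdeal S (tr a K) := by
  obtain ⟨lb, hlb⟩ := ideal_bddBelow hS hK.1
  refine ⟨⟨?_, ?_, ?_⟩, ?_, ?_⟩
  · obtain ⟨x, hx⟩ := hK.1.1
    exact ⟨a + x, ⟨x, hx, rfl⟩⟩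
  · rintro x ⟨y, hy, rfl⟩ s hs
    exact ⟨y + s, hK.1.2.1 y hy s hs, by funext i; simp only [Pi.add_apply]; ring⟩
  · -- ∃ α ∈ S, ∀ x ∈ tr a K, α + x ∈ S
    have hγS0 : ∀ i, 0 ≤ γS i := fun i => hS.2.2.1 γS (cond_subset hγS.1) i
    refine ⟨γS + fun i => max 0 (γS i - (a i + lb i)), ?_, ?_⟩
    · refine mem_cond.1 hγS.1 _ fun i => ?_
      simp only [Pi.zero_apply]
      exact le_max_left _ _
    · rintro x ⟨y, hy, rfl⟩
      have heq : (γS + fun i => max 0 (γS i - (a i + lb i))) + (a + y)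
          = γS + fun i => (max 0 (γS i - (a i + lb i)) + a i + y i) := by
        funext i; simp only [Pi.add_apply]; ring
      rw [heq]
      refine mem_cond.1 hγS.1 _ fun i => ?_
      simp only [Pi.zero_apply]
      have h1 : γS i - (a i + lb i) ≤ max 0 (γS i - (a i + lb i)) := le_max_right _ _
      have h2 : lb i ≤ y i := hlb y hy i
      have h3 : (0:ℤ) ≤ γS i := hγS0 i
      omega
  · intro x hx y hy
    obtain ⟨x', hx', rfl⟩ := hx
    obtain ⟨y', hy', rfl⟩ := hy
    refine ⟨x' ⊓ y', hK.2.1 x' hx' y' hy', ?_⟩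
    funext i
    simp only [Pi.inf_apply, Pi.add_apply]
    omega
  · intro x hx y hy j hj
    obtain ⟨x', hx', rfl⟩ := hx
    obtain ⟨y', hy', rfl⟩ := hy
    simp only [Pi.add_apply] at hj
    obtain ⟨ε, hε, h1, h2, h3⟩ := hK.2.2 x' hx' y' hy' j (by omega)
    refine ⟨a + ε, ⟨ε, hε, rfl⟩, by simp only [Pi.add_apply]; omega, ?_, ?_⟩
    · intro i hi
      have := h2 i hi
      simp only [Pi.add_apply]
      omega
    · intro i hi hne
      have := h3 i hi (by simp only [Pi.add_apply] at hne; omega)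
      simp only [Pi.add_apply]
      omega

/-- conductor of a translate -/
lemma cond_tr_least {A : Set (I → ℤ)} {g a : I → ℤ} (h : IsLeast (cond A) g) :
    IsLeast (cond (tr a A)) (a + g) := by
  constructor
  · refine mem_cond.2 fun n hn => mem_tr.2 ?_
    rw [show a + g + n - a = g + n by abel]
    exact mem_cond.1 h.1 n hn
  · intro z hz
    have hz' : z - a ∈ cond A := by
      refine mem_cond.2 fun n hn => ?_
      have := mem_tr.1 (mem_cond.1 hz n hn)
      rwa [show z + n - a = z - a + n by abel] at this
    have hle := h.2 hz'
    intro i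
    have := hle i
    simp only [Pi.sub_apply, Pi.add_apply] at *
    omega

/-- Lemma D : least of `cond (sub A B)` -/
lemma cond_sub_least {A B : Set (I → ℤ)} {g m : I → ℤ}
    (hg : IsLeast (cond A) g) (hm : IsLeast B m) :
    IsLeast (cond (sub A B)) (g - m) := by
  constructor
  · refine mem_cond.2 fun n hn => mem_sub.2 fun b hb => ?_
    rw [show g - m + n + b = g + (n + (b - m)) by abel]
    refine mem_cond.1 hg.1 _ fun i => ?_
    have h1 := hn i
    have h2 : m i ≤ b i := hm.2 hb i
    simp only [Pi.zero_apply, Pi.add_apply, Pi.sub_apply] at *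
    omega
  · intro z hz
    have hz' : z + m ∈ cond A := by
      refine mem_cond.2 fun n hn => ?_
      have := mem_sub.1 (mem_cond.1 hz n hn) m hm.1
      rwa [show z + n + m = z + m + n by abel] at this
    have hle := hg.2 hz'
    intro i
    have := hle i
    simp only [Pi.sub_apply, Pi.add_apply] at *
    omega

end CanAux
namespace CanAux

open GoodSemigroup

variable {I : Type*}

lemma DD_satE1 {τ : I → ℤ} {E : Set (I → ℤ)} : SatE1 (DD τ E) := by
  intro a ha b hb
  refine mem_DD.2 fun e he i hi => ?_
  by_contra hc
  push_neg at hc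
  have habi : (a ⊓ b) i = min (a i) (b i) := by simp [Pi.inf_apply]
  rcases le_total (a i) (b i) with h | h
  · refine not_mem_DD e he i ?_ (fun j hj => ?_) ha
    · rw [hi, habi, min_eq_left h]
    · have := hc j hj
      have : τ j - (a ⊓ b) j < e j := this
      have hj2 : (a ⊓ b) j = min (a j) (b j) := by simp [Pi.inf_apply]
      omega
  · refine not_mem_DD e he i ?_ (fun j hj => ?_) hb
    · rw [hi, habi, min_eq_right h]
    · have : τ j - (a ⊓ b) j < e j := hc j hj
      have hj2 : (a ⊓ b) j = min (a j) (b j) := by simp [Pi.inf_apply]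
      omega

lemma DD_add {S : Set (I → ℤ)} {τ : I → ℤ} {E : Set (I → ℤ)} (hEadd : ∀ e ∈ E, ∀ s ∈ S, e + s ∈ E) :
    ∀ α ∈ DD τ E, ∀ s ∈ S, α + s ∈ DD τ E := by
  intro α hα s hs
  refine mem_DD.2 fun e he i hi => ?_
  by_contra hc
  push_neg at hc
  refine not_mem_DD (e + s) (hEadd e he s hs) i ?_ (fun j hj => ?_) hα
  · simp only [Pi.add_apply] at hi ⊢
    omega
  · have := hc j hj
    simp only [Pi.add_apply] at this ⊢
    omega

lemma DD_nonempty {τ : I → ℤ} {E : Set (I → ℤ)} (lb : I → ℤ) (hlb : ∀ e ∈ E, lb ≤ e) :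
    (τ - lb + 1) ∈ DD τ E := by
  refine mem_DD.2 fun e he i hi => ?_
  exfalso
  have h1 : lb i ≤ e i := hlb e he i
  simp only [Pi.add_apply, Pi.sub_apply, Pi.one_apply] at hi
  omega

lemma DD_bddBelow {τ : I → ℤ} {E : Set (I → ℤ)} (g : I → ℤ) (hg : g ∈ cond E) :
    ∀ α ∈ DD τ E, τ - g + 1 ≤ α := by
  classical
  intro α hα i
  by_contra hc
  push_neg at hc
  simp only [Pi.add_apply, Pi.sub_apply, Pi.one_apply] at hc
  -- e := g + correction ∈ E lies in Δ_i(τ - α)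
  set e : I → ℤ := fun l => if l = i then τ i - α i else max (τ l - α l + 1) (g l) with he
  have heE : e ∈ E := by
    have : g + (e - g) ∈ E := by
      refine mem_cond.1 hg _ fun l => ?_
      simp only [Pi.zero_apply, Pi.sub_apply, he]
      by_cases hl : l = i
      · subst hl; simp only [if_pos rfl]; omega
      · simp only [if_neg hl]
        have := le_max_right (τ l - α l + 1) (g l)
        omega
    rwa [show g + (e - g) = e by abel] at this
  refine not_mem_DD e heE i ?_ (fun j hj => ?_) hα
  · simp only [he, if_pos rfl]
  · simp only [he, if_neg hj]
    have := le_max_left (τ j - α j + 1) (g j)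
    omega

/-- L1 : `sub (K0) E = DD τ E` -/
lemma sub_K0_eq_DD {S : Set (I → ℤ)} (τ : I → ℤ) {E : Set (I → ℤ)}
    (h0 : (0 : I → ℤ) ∈ S) (hEadd : ∀ e ∈ E, ∀ s ∈ S, e + s ∈ E) :
    sub (DD τ S) E = DD τ E := by
  ext z
  constructor
  · intro h
    refine mem_DD.2 fun e he i hi => ?_
    by_contra hc
    push_neg at hc
    have hzK : z + e ∈ DD τ S := mem_sub.1 h e he
    refine not_mem_DD 0 h0 i ?_ (fun j hj => ?_) hzK
    · simp only [Pi.zero_apply, Pi.add_apply]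
      omega
    · have := hc j hj
      simp only [Pi.zero_apply, Pi.add_apply]
      omega
  · intro h
    refine mem_sub.2 fun e he => ?_
    refine mem_DD.2 fun s hs i hi => ?_
    by_contra hc
    push_neg at hc
    refine not_mem_DD (e + s) (hEadd e he s hs) i ?_ (fun j hj => ?_) h
    · simp only [Pi.add_apply] at hi ⊢
      omega
    · have := hc j hj
      simp only [Pi.add_apply] at this ⊢
      omega

/-- L2 : `E ⊆ DD τ (DD τ E)` -/
lemma subset_DD_DD {τ : I → ℤ} {E : Set (I → ℤ)} : E ⊆ DD τ (DD τ E) := by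
  intro x hx
  refine mem_DD.2 fun α hα i hi => ?_
  by_contra hc
  push_neg at hc
  refine not_mem_DD x hx i ?_ (fun j hj => ?_) hα
  · omega
  · have := hc j hj
    omega

end CanAux
namespace CanAux

open GoodSemigroup

variable {I : Type*} [Fintype I] [Nonempty I]

/-- BIG 1 : if `x ∉ E` (E a good ideal), there is `β` with one coordinate equal to `x`,
the others strictly below, such that `Δ^E(β) = ∅`. -/
lemma big1 {S E : Set (I → ℤ)} (hS : IsGood S) (hE : IsGoodIdeal S E)
    {x : I → ℤ} (hx : x ∉ E) :
    ∃ β : I → ℤ, (∃ i, β i = x i ∧ ∀ j, j ≠ i → β j < x j) ∧ delta β ∩ E = ∅ := by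
  classical
  obtain ⟨μ, hμ⟩ := goodIdeal_exists_least hS hE
  -- choose a coordinate i such that every e ∈ E with e i = x i dips below x somewhere
  have hi : ∃ i, ∀ e ∈ E, e i = x i → ∃ j, j ≠ i ∧ e j < x j := by
    by_contra hc
    push_neg at hc
    choose w hwE hwi hwge using hc
    have key : ∀ s : Finset I, ∃ z ∈ E, (∀ j, x j ≤ z j) ∧ ∀ i ∈ s, z i = x i := by
      intro s
      induction s using Finset.induction_on with
      | empty =>
        obtain ⟨i0⟩ := ‹Nonempty I›
        refine ⟨w i0, hwE i0, fun j => ?_, by simp⟩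
        by_cases hj : j = i0
        · exact le_of_eq (by rw [hj]; exact (hwi i0).symm)
        · exact hwge i0 j hj
      | @insert i s his ih =>
        obtain ⟨z, hzE, hzge, hzeq⟩ := ih
        refine ⟨z ⊓ w i, hE.2.1 z hzE (w i) (hwE i), fun j => ?_, fun l hl => ?_⟩
        · have h1 : x j ≤ z j := hzge j
          have h2 : x j ≤ w i j := by
            by_cases hj : j = i
            · exact le_of_eq (by rw [hj]; exact (hwi i).symm)
            · exact hwge i j hj
          have : (z ⊓ w i) j = min (z j) (w i j) := by simp [Pi.inf_apply]
          omega
        · have h3 : (z ⊓ w i) l = min (z l) (w i l) := by simp [Pi.inf_apply]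
          rcases Finset.mem_insert.1 hl with rfl | hl
          · have h5 := hzge l
            have h6 := hwi l
            rw [h3, h6]
            omega
          · have h4 : x l ≤ w i l := by
              by_cases hj : l = i
              · subst hj; rw [hwi l]
              · exact hwge i l hj
            rw [h3, hzeq l hl]
            omega
    obtain ⟨z, hzE, hzge, hzeq⟩ := key Finset.univ
    have : z = x := funext fun j => hzeq j (Finset.mem_univ j)
    rw [this] at hzE
    exact hx hzE
  obtain ⟨i, hi⟩ := hi
  set bot : I → ℤ := fun j => min (μ j) (x j) - 1 with hbot
  set P : (I → ℤ) → Prop := fun β =>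
    β i = x i ∧ (∀ j, j ≠ i → bot j ≤ β j ∧ β j ≤ x j - 1) ∧
      (∀ e ∈ E, e i = x i → ∃ j, j ≠ i ∧ e j ≤ β j) with hP
  set Wt : (I → ℤ) → ℕ := fun β => ∑ j, (β j - bot j).toNat with hWt
  set β0 : I → ℤ := fun j => if j = i then x i else x j - 1 with hβ0def
  have hβ0 : P β0 := by
    refine ⟨by simp [hβ0def], fun j hj => ?_, fun e he hei => ?_⟩
    · simp only [hβ0def, if_neg hj, hbot]
      omega
    · obtain ⟨j, hj, hlt⟩ := hi e he hei
      exact ⟨j, hj, by simp only [hβ0def, if_neg hj]; omega⟩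
  have hNex : ∃ n, ∃ β, P β ∧ Wt β = n := ⟨Wt β0, β0, hβ0, rfl⟩
  obtain ⟨β₀, hP₀, hwt₀⟩ := Nat.find_spec hNex
  refine ⟨β₀, ⟨i, hP₀.1, fun j hj => by have := (hP₀.2.1 j hj).2; omega⟩, ?_⟩
  rw [Set.eq_empty_iff_forall_notMem]
  rintro y ⟨hyd, hyE⟩
  obtain ⟨k, hyk, hygt⟩ := mem_delta.1 hyd
  by_cases hk : k = i
  · subst hk
    obtain ⟨j, hj, hle⟩ := hP₀.2.2 y hyE (hyk.trans hP₀.1)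
    exact absurd (hygt j hj) (not_lt.2 hle)
  · have hμy : μ k ≤ y k := hμ.2 hyE k
    have hbk : bot k < β₀ k := by
      have : bot k = min (μ k) (x k) - 1 := rfl
      omega
    set β' : I → ℤ := Function.update β₀ k (β₀ k - 1) with hβ'
    have hβ'k : β' k = β₀ k - 1 := Function.update_self k _ β₀
    have hβ'ne : ∀ j, j ≠ k → β' j = β₀ j := fun j hj => Function.update_of_ne hj _ β₀
    have hwtlt : Wt β' < Wt β₀ := by
      refine Finset.sum_lt_sum (fun j _ => ?_) ⟨k, Finset.mem_univ k, ?_⟩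
      · by_cases hj : j = k
        · subst hj
          rw [hβ'k]
          have : (β₀ j - 1 - bot j) ≤ (β₀ j - bot j) := by omega
          exact Int.toNat_le_toNat this
        · rw [hβ'ne j hj]
      · rw [hβ'k]
        have h2 : (0:ℤ) < β₀ k - bot k := by omega
        rw [Int.toNat_lt_toNat h2]
        omega
    have hnP : ¬ P β' := by
      intro hP'
      have hlt : Wt β' < Nat.find hNex := by omega
      exact Nat.find_min hNex hlt ⟨β', hP', rfl⟩
    have hP'1 : β' i = x i := by rw [hβ'ne i (fun h => hk h.symm)]; exact hP₀.1
    have hP'2 : ∀ j, j ≠ i → bot j ≤ β' j ∧ β' j ≤ x j - 1 := by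
      intro j hj
      by_cases hjk : j = k
      · subst hjk
        rw [hβ'k]
        have := (hP₀.2.1 j hj)
        omega
      · rw [hβ'ne j hjk]
        exact hP₀.2.1 j hj
    have hP'3 : ¬ (∀ e ∈ E, e i = x i → ∃ j, j ≠ i ∧ e j ≤ β' j) := by
      intro h3
      exact hnP ⟨hP'1, hP'2, h3⟩
    push_neg at hP'3
    obtain ⟨f, hfE, hfi, hf⟩ := hP'3
    have hfk : f k = β₀ k := by
      obtain ⟨j, hj, hle⟩ := hP₀.2.2 f hfE hfi
      by_cases hjk : j = k
      · subst hjk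
        have := hf j hj
        rw [hβ'k] at this
        omega
      · exact absurd hle (by rw [← hβ'ne j hjk]; exact not_le.2 (hf j hj))
    obtain ⟨ε, hεE, hε1, hε2, hε3⟩ := hE.2.2 f hfE y hyE k (by omega)
    have hyi : x i < y i := by
      have := hygt i (fun h => hk h.symm)
      rw [hP₀.1] at this
      omega
    have hεi : ε i = x i := by
      have hne : f i ≠ y i := by omega
      have := hε3 i (fun h => hk h.symm) hne
      rw [this, hfi]
      rw [min_eq_left (by omega)]
    obtain ⟨j, hj, hle⟩ := hP₀.2.2 ε hεE hεi
    by_cases hjk : j = k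
    · subst hjk
      omega
    · have h1 : min (f j) (y j) ≤ ε j := hε2 j hjk
      have h2 : β₀ j < f j := by rw [← hβ'ne j hjk]; exact hf j hj
      have h3 : β₀ j < y j := hygt j hjk
      omega

end CanAux
namespace CanAux

open GoodSemigroup

variable {I : Type*} [Fintype I] [Nonempty I]

/-- BIG 2 : the dual of a good ideal satisfies (E2). -/
lemma DD_satE2 {S E : Set (I → ℤ)} (hS : IsGood S) (hE : IsGoodIdeal S E) (τ : I → ℤ) :
    SatE2 (DD τ E) := by
  classical
  intro a ha b hb j hj
  obtain ⟨μ, hμ⟩ := goodIdeal_exists_least hS hE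
  have hmDD : a ⊓ b ∈ DD τ E := DD_satE1 a ha b hb
  obtain ⟨M, hMl⟩ : ∃ M : I → ℤ, ∀ l, M l = τ l - min (a l) (b l) :=
    ⟨fun l => τ l - min (a l) (b l), fun l => rfl⟩
  have hminj : min (a j) (b j) = a j := by rw [hj, min_self]
  have hmDD' : ∀ e ∈ E, ∀ i, e i = M i → ∃ l, l ≠ i ∧ e l ≤ M l := by
    intro e he i hi
    have h2 := mem_DD.1 hmDD e he i (by
      have h1 : (a ⊓ b) i = min (a i) (b i) := by simp [Pi.inf_apply]
      have := hMl i
      omega)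
    obtain ⟨l, hl, hle⟩ := h2
    refine ⟨l, hl, ?_⟩
    have h1 : (a ⊓ b) l = min (a l) (b l) := by simp [Pi.inf_apply]
    have := hMl l
    omega
  have hmDD2 : ∀ e ∈ E, ∀ i, e i = M i → (∀ l, l ≠ i → M l < e l) → False := by
    intro e he i hi hgt
    obtain ⟨l, hl, hle⟩ := hmDD' e he i hi
    exact absurd (hgt l hl) (not_lt.2 hle)
  obtain ⟨bot, hbotl⟩ : ∃ bot : I → ℤ, ∀ l, bot l = min (μ l) (M l) - 1 :=
    ⟨fun l => min (μ l) (M l) - 1, fun l => rfl⟩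
  have hbotμ : ∀ l, bot l < μ l := fun l => by
    have := hbotl l; have := min_le_left (μ l) (M l); omega
  have hbotM : ∀ l, bot l ≤ M l - 1 := fun l => by
    have := hbotl l; have := min_le_right (μ l) (M l); omega
  set Dang : (I → ℤ) → Prop := fun e => e ∈ E ∧
    ∃ k, a k ≠ b k ∧ e k = M k ∧ ∀ l, a l ≠ b l → l ≠ k → M l < e l with hDang
  -- Fact A
  have factA : ∀ e, Dang e → (∀ l, a l = b l → l ≠ j → M l < e l) → M j ≤ e j → False := by
    rintro e ⟨heE, k, hkab, hek, hkW⟩ hU hj2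
    have hkj : k ≠ j := fun h => hkab (h ▸ hj)
    rcases eq_or_lt_of_le hj2 with hej | hej
    · rcases lt_or_gt_of_ne hkab with hck | hck
      · -- a k < b k : contradict b ∈ DD τ E
        refine not_mem_DD e heE j ?_ (fun l hl => ?_) hb
        · have := hMl j
          omega
        · by_cases hlab : a l = b l
          · by_cases hlj : l = j
            · exact absurd hlj hl
            · have := hU l hlab hlj
              have := hMl l
              have : min (a l) (b l) = b l := by rw [hlab, min_self]
              omega
          · by_cases hlk : l = k
            · subst hlk
              have : min (a l) (b l) = a l := min_eq_left (le_of_lt hck)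
              have := hMl l
              omega
            · have := hkW l hlab hlk
              have := min_le_right (a l) (b l)
              have := hMl l
              omega
      · -- b k < a k : contradict a ∈ DD τ E
        refine not_mem_DD e heE j ?_ (fun l hl => ?_) ha
        · have := hMl j
          omega
        · by_cases hlab : a l = b l
          · by_cases hlj : l = j
            · exact absurd hlj hl
            · have := hU l hlab hlj
              have := hMl l
              have : min (a l) (b l) = a l := by rw [hlab, min_self]
              omega
          · by_cases hlk : l = k
            · subst hlk
              have : min (a l) (b l) = b l := min_eq_right (le_of_lt hck)
              have := hMl l
              omega
            · have := hkW l hlab hlk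
              have := min_le_left (a l) (b l)
              have := hMl l
              omega
    · -- e j > M j
      refine hmDD2 e heE k hek (fun l hl => ?_)
      by_cases hlab : a l = b l
      · by_cases hlj : l = j
        · subst hlj; omega
        · exact hU l hlab hlj
      · exact hkW l hlab hl
  set P : (I → ℤ) → Prop := fun β =>
    (∀ l, a l ≠ b l → β l = M l) ∧ (β j ≤ M j - 1) ∧
      (∀ l, a l = b l → bot l ≤ β l ∧ β l ≤ M l) ∧
      (∀ e, Dang e → ∃ l, a l = b l ∧ e l ≤ β l) with hP
  set Wt : (I → ℤ) → ℕ := fun β => ∑ l, (β l - bot l).toNat with hWt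
  set β0 : I → ℤ := fun l => if l = j then M j - 1 else M l with hβ0def
  have hβ0 : P β0 := by
    refine ⟨fun l hl => ?_, by simp [hβ0def], fun l hl => ?_, fun e he => ?_⟩
    · have hlj : l ≠ j := fun h => hl (h ▸ hj)
      simp [hβ0def, if_neg hlj]
    · by_cases hlj : l = j
      · subst hlj
        simp only [hβ0def, if_pos rfl]
        have := hbotM l
        omega
      · simp only [hβ0def, if_neg hlj]
        have := hbotM l
        omega
    · by_contra hc
      push_neg at hc
      refine factA e he (fun l hlab hlj => ?_) ?_
      · have := hc l hlab
        simp only [hβ0def, if_neg hlj] at this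
        omega
      · have := hc j hj
        simp only [hβ0def, if_pos rfl] at this
        omega
  have hNex : ∃ n, ∃ β, P β ∧ Wt β = n := ⟨Wt β0, β0, hβ0, rfl⟩
  obtain ⟨β₀, hP₀, hwt₀⟩ := Nat.find_spec hNex
  have hempty : ∀ y ∈ E, y ∉ delta β₀ := by
    intro y hyE hyd
    obtain ⟨k, hyk, hygt⟩ := mem_delta.1 hyd
    by_cases hkab : a k = b k
    · -- lower the k-th coordinate
      have hμy : μ k ≤ y k := hμ.2 hyE k
      have hbk : bot k < β₀ k := by
        have := hbotμ k
        omega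
      set β' : I → ℤ := Function.update β₀ k (β₀ k - 1) with hβ'
      have hβ'k : β' k = β₀ k - 1 := Function.update_self k _ β₀
      have hβ'ne : ∀ l, l ≠ k → β' l = β₀ l := fun l hl => Function.update_of_ne hl _ β₀
      have hwtlt : Wt β' < Wt β₀ := by
        refine Finset.sum_lt_sum (fun l _ => ?_) ⟨k, Finset.mem_univ k, ?_⟩
        · by_cases hl : l = k
          · subst hl
            rw [hβ'k]
            exact Int.toNat_le_toNat (by omega)
          · rw [hβ'ne l hl]
        · rw [hβ'k]
          rw [Int.toNat_lt_toNat (by omega)]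
          omega
      have hnP : ¬ P β' := fun hP' =>
        Nat.find_min hNex (by omega) ⟨β', hP', rfl⟩
      have hP'4 : ¬ (∀ e, Dang e → ∃ l, a l = b l ∧ e l ≤ β' l) := by
        intro h4
        refine hnP ⟨fun l hl => ?_, ?_, fun l hl => ?_, h4⟩
        · have hlk : l ≠ k := fun h => hl (h ▸ hkab)
          rw [hβ'ne l hlk]
          exact hP₀.1 l hl
        · by_cases hjk : j = k
          · have h5 : β' j = β₀ j - 1 := by rw [hjk]; exact hβ'k
            have h6 := hP₀.2.1
            omega
          · rw [hβ'ne j hjk]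
            exact hP₀.2.1
        · by_cases hlk : l = k
          · subst hlk
            rw [hβ'k]
            have := hP₀.2.2.1 l hl
            omega
          · rw [hβ'ne l hlk]
            exact hP₀.2.2.1 l hl
      push_neg at hP'4
      obtain ⟨f, hfD, hf⟩ := hP'4
      have hfk : f k = β₀ k := by
        obtain ⟨l, hlab, hle⟩ := hP₀.2.2.2 f hfD
        by_cases hlk : l = k
        · subst hlk
          have := hf l hlab
          rw [hβ'k] at this
          omega
        · have := hf l hlab
          rw [hβ'ne l hlk] at this
          omega
      obtain ⟨hfE, kW, hkWab, hfkW, hfW⟩ := hfD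
      obtain ⟨ε, hεE, hε1, hε2, hε3⟩ := hE.2.2 f hfE y hyE k (by omega)
      have hkWk : kW ≠ k := fun h => hkWab (h ▸ hkab)
      have hykW : β₀ kW < y kW := hygt kW hkWk
      have hβkW : β₀ kW = M kW := hP₀.1 kW hkWab
      have hεkW : ε kW = M kW := by
        have hne : f kW ≠ y kW := by omega
        have h7 := hε3 kW hkWk hne
        rw [h7, hfkW]
        rw [min_eq_left (by omega)]
      have hεD : Dang ε := by
        refine ⟨hεE, kW, hkWab, hεkW, fun l hlab hlkW => ?_⟩
        have hlk : l ≠ k := fun h => hlab (h ▸ hkab)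
        have h1 : min (f l) (y l) ≤ ε l := hε2 l hlk
        have h2 : M l < f l := hfW l hlab hlkW
        have h3 : β₀ l < y l := hygt l hlk
        have h4 : β₀ l = M l := hP₀.1 l hlab
        rcases le_total (f l) (y l) with h | h
        · have : min (f l) (y l) = f l := min_eq_left h
          omega
        · have : min (f l) (y l) = y l := min_eq_right h
          omega
      obtain ⟨l, hlab, hle⟩ := hP₀.2.2.2 ε hεD
      by_cases hlk : l = k
      · subst hlk
        omega
      · have h1 : min (f l) (y l) ≤ ε l := hε2 l hlk
        have h2 : β' l < f l := hf l hlab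
        rw [hβ'ne l hlk] at h2
        have h3 : β₀ l < y l := hygt l hlk
        rcases le_total (f l) (y l) with h | h
        · have : min (f l) (y l) = f l := min_eq_left h
          omega
        · have : min (f l) (y l) = y l := min_eq_right h
          omega
    · -- k is an unequal coordinate : y is dangerous
      have hyD : Dang y := by
        refine ⟨hyE, k, hkab, by rw [← hP₀.1 k hkab]; exact hyk, fun l hlab hlk => ?_⟩
        have h1 := hygt l hlk
        have h2 := hP₀.1 l hlab
        omega
      obtain ⟨l, hlab, hle⟩ := hP₀.2.2.2 y hyD
      have hlk : l ≠ k := fun h => hkab (by rw [← h]; exact hlab)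
      exact absurd (hygt l hlk) (not_lt.2 hle)
  -- conclude
  refine ⟨τ - β₀, ?_, ?_, ?_, ?_⟩
  · show delta (τ - (τ - β₀)) ∩ E = ∅
    rw [show τ - (τ - β₀) = β₀ by abel]
    rw [Set.eq_empty_iff_forall_notMem]
    rintro y ⟨hyd, hyE⟩
    exact hempty y hyE hyd
  · have h1 : β₀ j ≤ M j - 1 := hP₀.2.1
    have h2 := hMl j
    simp only [Pi.sub_apply]
    omega
  · intro i hi
    simp only [Pi.sub_apply]
    have h2 := hMl i
    by_cases hiab : a i = b i
    · have h3 := (hP₀.2.2.1 i hiab).2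
      have : min (a i) (b i) = a i := by rw [hiab, min_self]
      omega
    · have := hP₀.1 i hiab
      have := min_le_left (a i) (b i)
      have := min_le_right (a i) (b i)
      omega
  · intro i hi hiab
    have := hP₀.1 i hiab
    have h2 := hMl i
    simp only [Pi.sub_apply]
    omega

end CanAux
namespace CanAux

open GoodSemigroup

variable {I : Type*} [Fintype I] [Nonempty I]

/-- Fill lemma (Lemma C'). -/
lemma fill {S E : Set (I → ℤ)} (hE : IsGoodIdeal S E) {g : I → ℤ}
    (hg : IsLeast (cond E) g) (z : I → ℤ) (i : I) :
    ∀ n : ℕ, ∀ β, β ∈ E → (∀ j, β j ≤ z j) → β i = z i →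
      (∀ j, j ≠ i → g j ≤ β j) → (∑ j, (z j - β j)).toNat = n → z ∈ E := by
  classical
  intro n
  induction n using Nat.strong_induction_on with
  | _ n ih =>
    intro β hβ hle hiz hgeg hsum
    by_cases hzb : ∀ j, z j ≤ β j
    · have : β = z := funext fun j => le_antisymm (hle j) (hzb j)
      rwa [← this]
    push_neg at hzb
    obtain ⟨j, hj⟩ := hzb
    have hji : j ≠ i := fun h => by rw [h, hiz] at hj; omega
    have hgj : g j ≤ β j := hgeg j hji
    -- the auxiliary element b
    set b : I → ℤ := fun k => if k = j then β j else max (z k) (g k) + 1 with hbdef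
    have hbE : b ∈ E := by
      have h1 : g + (b - g) ∈ E := by
        refine mem_cond.1 hg.1 _ fun k => ?_
        simp only [Pi.zero_apply, Pi.sub_apply, hbdef]
        by_cases hk : k = j
        · subst hk; simp only [if_pos rfl]; omega
        · simp only [if_neg hk]
          have := le_max_right (z k) (g k)
          omega
      rwa [show g + (b - g) = b by abel] at h1
    have hβb : β j = b j := by simp [hbdef]
    obtain ⟨ε, hεE, hε1, hε2, hε3⟩ := hE.2.2 β hβ b hbE j hβb
    have hεk : ∀ k, k ≠ j → ε k = β k := by
      intro k hk
      have hbk : b k = max (z k) (g k) + 1 := by simp [hbdef, if_neg hk]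
      have hne : β k ≠ b k := by
        have := le_max_left (z k) (g k)
        have := hle k
        omega
      have := hε3 k hk hne
      rw [this, hbk]
      have h5 := le_max_left (z k) (g k)
      have h6 := hle k
      rw [min_eq_left (by omega)]
    -- c and the new β
    set c : I → ℤ := fun k => max (z k) (g k) with hcdef
    have hcE : c ∈ E := by
      have h1 : g + (c - g) ∈ E := by
        refine mem_cond.1 hg.1 _ fun k => ?_
        simp only [Pi.zero_apply, Pi.sub_apply, hcdef]
        have := le_max_right (z k) (g k)
        omega
      rwa [show g + (c - g) = c by abel] at h1
    have hβ1E : ε ⊓ c ∈ E := hE.2.1 ε hεE c hcE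
    have hβ1 : ∀ k, (ε ⊓ c) k = min (ε k) (c k) := fun k => by
      simp [Pi.inf_apply]
    have hβ1k : ∀ k, k ≠ j → (ε ⊓ c) k = β k := by
      intro k hk
      rw [hβ1 k, hεk k hk, hcdef]
      have := le_max_left (z k) (g k)
      have := hle k
      simp only []
      rw [min_eq_left (by omega)]
    have hcj : c j = z j := by
      simp only [hcdef]
      exact max_eq_left (by omega)
    have hβ1j : (ε ⊓ c) j = min (ε j) (z j) := by rw [hβ1 j, hcj]
    have hβ1jlt : β j < (ε ⊓ c) j ∧ (ε ⊓ c) j ≤ z j := by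
      rw [hβ1j]
      constructor
      · have := min_le_left (ε j) (z j)
        rcases le_total (ε j) (z j) with h | h
        · rw [min_eq_left h]; omega
        · rw [min_eq_right h]; omega
      · exact min_le_right _ _
    refine ih ((∑ k, (z k - (ε ⊓ c) k)).toNat) ?_ (ε ⊓ c) hβ1E
      (fun k => ?_) ?_ (fun k hk => ?_) rfl
    · -- strictly smaller weight
      rw [← hsum]
      have hlt : (∑ k, (z k - (ε ⊓ c) k)) < ∑ k, (z k - β k) := by
        refine Finset.sum_lt_sum (fun k _ => ?_) ⟨j, Finset.mem_univ j, by omega⟩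
        by_cases hk : k = j
        · subst hk; omega
        · rw [hβ1k k hk]
      have hnn : (0:ℤ) ≤ ∑ k, (z k - (ε ⊓ c) k) := by
        refine Finset.sum_nonneg fun k _ => ?_
        by_cases hk : k = j
        · subst hk; omega
        · rw [hβ1k k hk]
          have := hle k
          omega
      omega
    · by_cases hk : k = j
      · subst hk; omega
      · rw [hβ1k k hk]; exact hle k
    · rw [hβ1k i (fun h => hji h.symm)]
      exact hiz
    · by_cases hkj : k = j
      · subst hkj; omega
      · rw [hβ1k k hkj]; exact hgeg k hk

/-- Lemma B : a good ideal with conductor `γS` is contained in `K0`. -/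
lemma subset_K0 {S E : Set (I → ℤ)} (hS : IsGood S) {γS : I → ℤ}
    (hγS : IsLeast (cond S) γS) (hE : IsGoodIdeal S E)
    (hgE : IsLeast (cond E) γS) : E ⊆ K0 S (γS - 1) := by
  classical
  intro x hx
  rw [K0_eq_DD]
  refine mem_DD.2 fun s hs i hi => ?_
  by_contra hc
  push_neg at hc
  have hτ : ∀ l, (γS - 1 : I → ℤ) l = γS l - 1 := fun l => by
    simp [Pi.sub_apply, Pi.one_apply]
  -- β := x + s
  have hβE : x + s ∈ E := hE.1.2.1 x hx s hs
  have hβi : (x + s) i = γS i - 1 := by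
    have := hτ i
    simp only [Pi.add_apply]
    omega
  have hβge : ∀ l, l ≠ i → γS l ≤ (x + s) l := by
    intro l hl
    have h1 := hc l hl
    have := hτ l
    simp only [Pi.add_apply]
    omega
  -- d := γS lowered by one at i is in cond E
  set d : I → ℤ := fun l => if l = i then γS l - 1 else γS l with hddef
  have hd : d ∈ cond E := by
    refine mem_cond.2 fun n hn => ?_
    by_cases hni : 1 ≤ n i
    · have h1 : γS + (d + n - γS) ∈ E := by
        refine mem_cond.1 hgE.1 _ fun l => ?_
        simp only [Pi.zero_apply, Pi.sub_apply, Pi.add_apply, hddef]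
        have := hn l
        simp only [Pi.zero_apply] at this
        by_cases hl : l = i
        · subst hl; simp only [if_pos rfl]; omega
        · simp only [if_neg hl]; omega
      rwa [show γS + (d + n - γS) = d + n by abel] at h1
    · have hni0 : n i = 0 := by
        have := hn i
        simp only [Pi.zero_apply] at this
        omega
      -- use the fill lemma with base point (x+s) ⊓ c
      set c : I → ℤ := fun l => max (d l + n l) (γS l) with hcdef
      have hcE : c ∈ E := by
        have h1 : γS + (c - γS) ∈ E := by
          refine mem_cond.1 hgE.1 _ fun l => ?_
          simp only [Pi.zero_apply, Pi.sub_apply, hcdef]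
          have := le_max_right (d l + n l) (γS l)
          omega
        rwa [show γS + (c - γS) = c by abel] at h1
      have hβ'E : (x + s) ⊓ c ∈ E := hE.2.1 _ hβE _ hcE
      have hβ'app : ∀ l, ((x + s) ⊓ c) l = min ((x+s) l) (c l) := fun l => by
        simp [Pi.inf_apply]
      have hci : c i = γS i := by
        simp only [hcdef, hddef, if_pos rfl, Pi.add_apply]
        rw [max_eq_right (by omega)]
      have hβ'i : ((x + s) ⊓ c) i = γS i - 1 := by
        rw [hβ'app i, hβi, hci, min_eq_left (by omega)]
      refine fill hE hgE (d + n) i ((∑ l, ((d + n) l - ((x+s) ⊓ c) l)).toNat)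
        ((x+s) ⊓ c) hβ'E (fun l => ?_) ?_ (fun l hl => ?_) rfl
      · by_cases hl : l = i
        · subst hl
          rw [hβ'i]
          have hdl : d l = γS l - 1 := by simp [hddef]
          simp only [Pi.add_apply]
          omega
        · have hdl : d l = γS l := by simp [hddef, if_neg hl]
          have hgl : γS l ≤ d l + n l := by
            have := hn l
            simp only [Pi.zero_apply] at this
            omega
          have hmax : c l = d l + n l := by
            have hcl : c l = max (d l + n l) (γS l) := rfl
            rw [hcl]
            exact max_eq_left hgl
          have h4 : ((x+s) ⊓ c) l ≤ c l := by
            rw [hβ'app l]; exact min_le_right _ _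
          have h5 : (d + n) l = d l + n l := rfl
          omega
      · rw [hβ'i]
        have hdi : d i = γS i - 1 := by simp [hddef]
        simp only [Pi.add_apply]
        omega
      · rw [hβ'app l]
        have hβl := hβge l hl
        have hcl : γS l ≤ c l := le_max_right _ _
        rcases le_total ((x+s) l) (c l) with h | h
        · rw [min_eq_left h]
          exact hβl
        · rw [min_eq_right h]
          exact hcl
  -- contradiction with minimality of γS
  have := hgE.2 hd i
  simp only [hddef, if_pos rfl] at this
  omega

/-- conductor of `K0` is exactly `γS`. -/
lemma K0_cond_least {S : Set (I → ℤ)} (hS : IsGood S) {γS : I → ℤ}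
    (hγS : IsLeast (cond S) γS) : IsLeast (cond (K0 S (γS - 1))) γS := by
  classical
  have hτ : ∀ l, (γS - 1 : I → ℤ) l = γS l - 1 := fun l => by
    simp [Pi.sub_apply, Pi.one_apply]
  constructor
  · refine mem_cond.2 fun n hn => ?_
    rw [K0_eq_DD]
    refine mem_DD.2 fun s hs i hi => ?_
    exfalso
    have h1 : 0 ≤ s i := hS.2.2.1 s hs i
    have h2 := hn i
    have h3 := hτ i
    simp only [Pi.zero_apply, Pi.add_apply] at *
    omega
  · intro α hα
    intro i
    by_contra hc
    push_neg at hc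
    set z : I → ℤ := fun l => if l = i then γS i - 1 else max (α l) (γS l) with hzdef
    have hz : z ∈ K0 S (γS - 1) := by
      have h1 : α + (z - α) ∈ K0 S (γS - 1) := by
        refine mem_cond.1 hα _ fun l => ?_
        simp only [Pi.zero_apply, Pi.sub_apply, hzdef]
        by_cases hl : l = i
        · subst hl; simp only [if_pos rfl]; have h7 : α l < γS l := hc; omega
        · simp only [if_neg hl]
          have := le_max_left (α l) (γS l)
          omega
      rwa [show α + (z - α) = z by abel] at h1
    rw [K0_eq_DD] at hz
    refine not_mem_DD (0 : I → ℤ) hS.1 i ?_ (fun l hl => ?_) hz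
    · have hzi : z i = γS i - 1 := by simp [hzdef]
      simp only [Pi.zero_apply, Pi.sub_apply, Pi.one_apply]
      omega
    · have h6 := le_max_right (α l) (γS l)
      have hzl : z l = max (α l) (γS l) := by simp [hzdef, if_neg hl]
      simp only [Pi.zero_apply, Pi.sub_apply, Pi.one_apply]
      omega

end CanAux
namespace CanAux

open GoodSemigroup

variable {I : Type*} [Fintype I] [Nonempty I]

lemma isGoodIdeal_self {S : Set (I → ℤ)} (hS : IsGood S) : IsGoodIdeal S S :=
  ⟨⟨⟨0, hS.1⟩, hS.2.1, ⟨0, hS.1, fun a ha => by rwa [zero_add]⟩⟩,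
    hS.2.2.2.2.1, hS.2.2.2.2.2⟩

lemma DD_isGoodIdeal {S E : Set (I → ℤ)} (hS : IsGood S) {γS : I → ℤ}
    (hγS : IsLeast (cond S) γS) (hE : IsGoodIdeal S E) (τ : I → ℤ) :
    IsGoodIdeal S (DD τ E) := by
  obtain ⟨lb, hlb⟩ := ideal_bddBelow hS hE.1
  obtain ⟨gE, hgE⟩ := goodIdeal_cond_least hS γS hγS hE
  have hbdd := DD_bddBelow (τ := τ) gE hgE.1
  refine ⟨⟨⟨_, DD_nonempty lb hlb⟩, DD_add hE.1.2.1, ?_⟩, DD_satE1, DD_satE2 hS hE τ⟩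
  refine ⟨γS + fun i => max 0 (gE i - τ i - 1), ?_, ?_⟩
  · refine mem_cond.1 hγS.1 _ fun i => ?_
    simp only [Pi.zero_apply]
    exact le_max_left _ _
  · intro α hα
    have h1 := hbdd α hα
    have heq : (γS + fun i => max 0 (gE i - τ i - 1)) + α
        = γS + fun i => (max 0 (gE i - τ i - 1) + α i) := by
      funext i; simp only [Pi.add_apply]; ring
    rw [heq]
    refine mem_cond.1 hγS.1 _ fun i => ?_
    simp only [Pi.zero_apply]
    have h2 := le_max_right 0 (gE i - τ i - 1)
    have h3 : τ i - gE i + 1 ≤ α i := by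
      have := h1 i
      simp only [Pi.add_apply, Pi.sub_apply, Pi.one_apply] at this
      omega
    omega

lemma DD_DD {S E : Set (I → ℤ)} (hS : IsGood S) (hE : IsGoodIdeal S E) (τ : I → ℤ) :
    DD τ (DD τ E) = E := by
  refine Set.Subset.antisymm ?_ subset_DD_DD
  intro x hx
  by_contra hxE
  obtain ⟨β, ⟨i, hβi, hβlt⟩, hdel⟩ := big1 hS hE hxE
  have hα : (τ - β) ∈ DD τ E := by
    show delta (τ - (τ - β)) ∩ E = ∅
    rwa [show τ - (τ - β) = β by abel]
  refine not_mem_DD (τ - β) hα i ?_ (fun j hj => ?_) hx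
  · simp only [Pi.sub_apply]
    omega
  · have := hβlt j hj
    simp only [Pi.sub_apply]
    omega

/-- (iii) implies (i) -/
lemma imp_iii_i {S K : Set (I → ℤ)} (hS : IsGood S) (hK : IsGoodIdeal S K)
    (hdual : ∀ E, IsGoodIdeal S E → sub K (sub K E) = E) :
    IsCanonicalIdeal S K := by
  refine ⟨hK, fun E γ hE hKE hγK hγE => ?_⟩
  obtain ⟨μE, hμE⟩ := goodIdeal_exists_least hS hE
  obtain ⟨lbK, hlbK⟩ := ideal_bddBelow hS hK.1
  have hGne : (γ - μE) ∈ sub K E := by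
    refine mem_sub.2 fun e he => ?_
    have h1 : γ + (e - μE) ∈ K := by
      refine mem_cond.1 hγK.1 _ fun i => ?_
      have h2 : μE i ≤ e i := hμE.2 he i
      simp only [Pi.zero_apply, Pi.sub_apply]
      omega
    rwa [show γ + (e - μE) = γ - μE + e by abel] at h1
  have hGmin : ∀ a ∈ sub K E, ∀ b ∈ sub K E, (fun i => min (a i) (b i)) ∈ sub K E := by
    intro a ha b hb
    refine mem_sub.2 fun e he => ?_
    have h1 := hK.2.1 _ (mem_sub.1 ha e he) _ (mem_sub.1 hb e he)
    have heq : (a + e) ⊓ (b + e) = (fun i => min (a i) (b i)) + e := by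
      funext i
      simp only [Pi.inf_apply, Pi.add_apply]
      rcases le_total (a i) (b i) with h | h
      · rw [min_eq_left h, min_eq_left (by omega)]
      · rw [min_eq_right h, min_eq_right (by omega)]
    rwa [heq] at h1
  have hGbdd : ∀ z ∈ sub K E, (fun i => lbK i - μE i) ≤ z := by
    intro z hz i
    have h1 := hlbK _ (mem_sub.1 hz μE hμE.1) i
    simp only [Pi.add_apply] at h1
    show lbK i - μE i ≤ z i
    omega
  obtain ⟨m, hm⟩ := exists_least ⟨_, hGne⟩ hGmin ⟨_, hGbdd⟩
  have hcond : IsLeast (cond (sub K (sub K E))) (γ - m) := cond_sub_least hγK hm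
  rw [hdual E hE] at hcond
  have hmeq : γ - m = γ := hcond.unique hγE
  have hm0 : (0 : I → ℤ) ∈ sub K E := by
    have hmz : m = 0 := by
      funext i
      have := congrFun hmeq i
      simp only [Pi.sub_apply, Pi.zero_apply] at *
      omega
    exact hmz ▸ hm.1
  have hEK : E ⊆ K := fun e he => by
    have := mem_sub.1 hm0 e he
    rwa [zero_add] at this
  exact Set.Subset.antisymm hKE hEK

/-- (ii) implies (iii) -/
lemma imp_ii_iii {S K : Set (I → ℤ)} (hS : IsGood S) {γS : I → ℤ}
    (hii : ∃ α : I → ℤ, tr α K = K0 S (γS - 1)) :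
    ∀ E, IsGoodIdeal S E → sub K (sub K E) = E := by
  obtain ⟨α, hα⟩ := hii
  intro E hE
  have hKeq : K = tr (-α) (DD (γS - 1) S) := by
    rw [← K0_eq_DD, ← hα, tr_tr, neg_add_cancel, tr_zero]
  have h1 : sub K E = tr (-α) (DD (γS - 1) E) := by
    rw [hKeq, sub_tr_left, sub_K0_eq_DD (γS - 1) hS.1 hE.1.2.1]
  have h2 : sub K (sub K E)
      = tr (-α) (sub (DD (γS - 1) S) (tr (-α) (DD (γS - 1) E))) := by
    rw [h1]
    nth_rewrite 1 [hKeq]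
    rw [sub_tr_left]
  rw [sub_tr_right, neg_neg, tr_tr, neg_add_cancel, tr_zero] at h2
  rw [h2, sub_K0_eq_DD (γS - 1) hS.1 (DD_add hE.1.2.1)]
  exact DD_DD hS hE (γS - 1)

/-- (i) implies (ii) -/
lemma imp_i_ii {S K : Set (I → ℤ)} (hS : IsGood S) {γS : I → ℤ}
    (hγS : IsLeast (cond S) γS) (hK : IsGoodIdeal S K)
    (hcan : IsCanonicalIdeal S K) : ∃ α : I → ℤ, tr α K = K0 S (γS - 1) := by
  obtain ⟨γ₀, hγ₀⟩ := goodIdeal_cond_least hS γS hγS hK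
  have hK0good : IsGoodIdeal S (K0 S (γS - 1)) := by
    rw [K0_eq_DD]
    exact DD_isGoodIdeal hS hγS (isGoodIdeal_self hS) (γS - 1)
  have hK0γ : IsLeast (cond (K0 S (γS - 1))) γS := K0_cond_least hS hγS
  have hK'good : IsGoodIdeal S (tr (γS - γ₀) K) := isGoodIdeal_tr hS γS hγS hK _
  have hK'γ : IsLeast (cond (tr (γS - γ₀) K)) γS := by
    have := cond_tr_least (a := γS - γ₀) hγ₀
    rwa [show γS - γ₀ + γ₀ = γS by abel] at this
  have hsub : tr (γS - γ₀) K ⊆ K0 S (γS - 1) := subset_K0 hS hγS hK'good hK'γ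
  have hEgood : IsGoodIdeal S (tr (γ₀ - γS) (K0 S (γS - 1))) :=
    isGoodIdeal_tr hS γS hγS hK0good _
  have hEγ : IsLeast (cond (tr (γ₀ - γS) (K0 S (γS - 1)))) γ₀ := by
    have := cond_tr_least (a := γ₀ - γS) hK0γ
    rwa [show γ₀ - γS + γS = γ₀ by abel] at this
  have hKE : K ⊆ tr (γ₀ - γS) (K0 S (γS - 1)) := by
    intro x hx
    refine mem_tr.2 ?_
    have h1 : (γS - γ₀) + x ∈ K0 S (γS - 1) := hsub ⟨x, hx, rfl⟩
    rwa [show (γS - γ₀) + x = x - (γ₀ - γS) by abel] at h1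
  have hfin := hcan.2 _ γ₀ hEgood hKE hγ₀ hEγ
  refine ⟨γS - γ₀, ?_⟩
  rw [hfin, tr_tr, show γS - γ₀ + (γ₀ - γS) = 0 by abel, tr_zero]

end CanAux
open GoodSemigroup
/-- Theorem 45 (i)⇔(ii)⇔(iii): `K` is canonical iff `α + K = K⁰_S` for some `α`,
iff `K − (K − E) = E` for all `E ∈ 𝔊_S`. -/
theorem canonical_tfae {I : Type*} [Fintype I] [Nonempty I]
    (S : Set (I → ℤ)) (hS : IsGood S) (γS : I → ℤ) (hγS : IsLeast (cond S) γS)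
    (K : Set (I → ℤ)) (hK : IsGoodIdeal S K) :
    (IsCanonicalIdeal S K ↔
      ∃ α : I → ℤ, (fun x => α + x) '' K = K0 S (γS - 1)) ∧
    (IsCanonicalIdeal S K ↔
      ∀ E : Set (I → ℤ), IsGoodIdeal S E → sub K (sub K E) = E) := by
  have h12 : IsCanonicalIdeal S K →
      ∃ α : I → ℤ, (fun x => α + x) '' K = K0 S (γS - 1) :=
    fun h => CanAux.imp_i_ii hS hγS hK h
  have h23 : (∃ α : I → ℤ, (fun x => α + x) '' K = K0 S (γS - 1)) →
      ∀ E : Set (I → ℤ), IsGoodIdeal S E → sub K (sub K E) = E :=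
    fun h => CanAux.imp_ii_iii hS h
  have h31 : (∀ E : Set (I → ℤ), IsGoodIdeal S E → sub K (sub K E) = E) →
      IsCanonicalIdeal S K :=
    fun h => CanAux.imp_iii_i hS hK h
  exact ⟨⟨h12, fun h => h31 (h23 h)⟩, ⟨fun h => h23 (h12 h), h31⟩⟩
end

section
/- Let S be a good semigroup and let K be a canonical ideal of S. Then K − K = S; moreover, if in addition S ⊆ K ⊆ ℕ^I, then K = K^0_S. -/
open GoodSemigroup
set_option linter.unusedSectionVars false
namespace CanonAux

open GoodSemigroup

variable {I : Type*} [Fintype I] [Nonempty I]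

/-- membership in cond -/
lemma mem_cond {E : Set (I → ℤ)} {x : I → ℤ} :
    x ∈ cond E ↔ ∀ w : I → ℤ, 0 ≤ w → x + w ∈ E := Iff.rfl

lemma cond_mono {E F : Set (I → ℤ)} (h : E ⊆ F) : cond E ⊆ cond F :=
  fun _ hx w hw => h (hx w hw)

lemma mem_of_cond_le {E : Set (I → ℤ)} {x y : I → ℤ} (hx : x ∈ cond E) (hxy : x ≤ y) :
    y ∈ E := by
  have := hx (y - x) (by intro i; simpa using hxy i)
  simpa using this

lemma satE1_cond {E : Set (I → ℤ)} (h : SatE1 E) : SatE1 (cond E) := by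
  intro a ha b hb w hw
  have := h _ (ha w hw) _ (hb w hw)
  have e : a ⊓ b + w = (a + w) ⊓ (b + w) := by
    funext i; simp only [Pi.add_apply, Pi.inf_apply]; omega
  rw [e]; exact this

/-- least element of an E1-closed, bounded-below, nonempty set -/
lemma exists_least_of_E1 (A : Set (I → ℤ)) (hne : A.Nonempty) (hE1 : SatE1 A)
    (B : I → ℤ) (hB : ∀ a ∈ A, B ≤ a) : ∃ m, IsLeast A m := by
  -- for each coordinate, a minimizer
  have hco : ∀ i : I, ∃ w ∈ A, ∀ a ∈ A, w i ≤ a i := by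
    intro i
    obtain ⟨lb, ⟨w, hw, hwi⟩, hlb⟩ := Int.exists_least_of_bdd
      (P := fun z => ∃ a ∈ A, a i = z)
      ⟨B i, by rintro z ⟨a, ha, rfl⟩; exact hB a ha i⟩
      ⟨hne.choose i, hne.choose, hne.choose_spec, rfl⟩
    exact ⟨w, hw, fun a ha => hwi ▸ hlb (a i) ⟨a, ha, rfl⟩⟩
  choose w hw hwmin using hco
  classical
  have key : ∀ T : Finset I, ∃ u ∈ A, ∀ i ∈ T, ∀ a ∈ A, u i ≤ a i := by
    intro T
    induction T using Finset.induction with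
    | empty => exact ⟨hne.choose, hne.choose_spec, by simp⟩
    | @insert j T hj ih =>
      obtain ⟨u, hu, hmin⟩ := ih
      refine ⟨u ⊓ w j, hE1 _ hu _ (hw j), ?_⟩
      intro i hi a ha
      rcases Finset.mem_insert.mp hi with rfl | hi
      · exact le_trans (min_le_right _ _) (hwmin i a ha)
      · exact le_trans (min_le_left _ _) (hmin i hi a ha)
  obtain ⟨u, hu, hmin⟩ := key Finset.univ
  exact ⟨u, hu, fun a ha i => hmin i (Finset.mem_univ i) a ha⟩

end CanonAux
namespace CanonAux
open GoodSemigroup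
variable {I : Type*} [Fintype I] [Nonempty I]

/-- Lemma A: a good-ideal-like set has no element at level `γ j - 1` dominating `γ`
elsewhere, where `γ` is the least element of the conductor ideal. -/
lemma lemmaA (E : Set (I → ℤ)) (hE1 : SatE1 E) (hE2 : SatE2 E) (γ : I → ℤ)
    (hγ : IsLeast (cond E) γ) (j : I) (s : I → ℤ) (hs : s ∈ E)
    (hsj : s j = γ j - 1) (hsi : ∀ i, i ≠ j → γ i ≤ s i) : False := by
  classical
  have raise : ∀ n : ℕ, ∀ η ∈ E, η j = γ j - 1 → (∀ i, i ≠ j → γ i ≤ η i) →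
      ∀ N : I → ℤ, (∑ i ∈ Finset.univ.erase j, (N i - η i).toNat) ≤ n →
      ∃ η' ∈ E, η' j = γ j - 1 ∧ (∀ i, i ≠ j → γ i ≤ η' i) ∧ ∀ i, i ≠ j → N i ≤ η' i := by
    intro n
    induction n with
    | zero =>
      intro η hη hj hγη N hN
      refine ⟨η, hη, hj, hγη, fun i hij => ?_⟩
      by_contra hlt
      push_neg at hlt
      have h1 : 0 < (N i - η i).toNat := by omega
      have h2 : (N i - η i).toNat ≤ ∑ i ∈ Finset.univ.erase j, (N i - η i).toNat :=
        Finset.single_le_sum (f := fun i => (N i - η i).toNat) (by intro t _; positivity)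
          (by simp [hij])
      omega
    | succ n ih =>
      intro η hη hj hγη N hN
      by_cases hall : ∀ i, i ≠ j → N i ≤ η i
      · exact ⟨η, hη, hj, hγη, hall⟩
      push_neg at hall
      obtain ⟨k, hkj, hk⟩ := hall
      set b := Function.update η j (γ j) with hbdef
      have hbj : b j = γ j := by simp [hbdef]
      have hbi : ∀ i, i ≠ j → b i = η i := by
        intro i hij; simp [hbdef, Function.update_of_ne hij]
      have hbE : b ∈ E := by
        apply mem_of_cond_le hγ.1
        intro i
        by_cases hij : i = j
        · subst hij; simp [hbj]
        · rw [hbi i hij]; exact hγη i hij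
      have hmin : ∀ i, min (η i) (b i) = η i := by
        intro i
        by_cases hij : i = j
        · subst hij; rw [hbj, hj]; omega
        · rw [hbi i hij]; omega
      obtain ⟨ε, hεE, hεk, hεge, hεeq⟩ := hE2 η hη b hbE k (by rw [hbi k hkj])
      have hεj : ε j = γ j - 1 := by
        have := hεeq j (Ne.symm hkj) (by rw [hbj, hj]; omega)
        rw [this, hmin j, hj]
      have hεge' : ∀ i, i ≠ k → η i ≤ ε i := by
        intro i hik; have := hεge i hik; rwa [hmin i] at this
      have hεall : ∀ i, η i ≤ ε i := by
        intro i; by_cases hik : i = k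
        · subst hik; omega
        · exact hεge' i hik
      have hγε : ∀ i, i ≠ j → γ i ≤ ε i := fun i hij => le_trans (hγη i hij) (hεall i)
      refine ih ε hεE hεj hγε N ?_
      have hne : ∀ i ∈ Finset.univ.erase j, (N i - ε i).toNat ≤ (N i - η i).toNat := by
        intro i _; have := hεall i; omega
      have hlt : (N k - ε k).toNat < (N k - η k).toNat := by omega
      have := Finset.sum_lt_sum hne ⟨k, by simp [hkj], hlt⟩
      omega
  -- γ with the j-th coordinate lowered by one is in the conductor: contradiction
  have hγ' : Function.update γ j (γ j - 1) ∈ cond E := by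
    intro w hw
    set y := Function.update γ j (γ j - 1) + w with hydef
    by_cases hwj : 1 ≤ w j
    · apply mem_of_cond_le hγ.1
      intro i
      by_cases hij : i = j
      · subst hij; simp [hydef]; omega
      · simp [hydef, Function.update_of_ne hij]
        have := hw i; simp at this; omega
    · have hwj0 : w j = 0 := by have := hw j; simp at this; omega
      have hyj : y j = γ j - 1 := by simp [hydef, hwj0]
      have hyi : ∀ i, i ≠ j → γ i ≤ y i := by
        intro i hij
        have := hw i; simp at this
        simp [hydef, Function.update_of_ne hij]; omega
      obtain ⟨η', hη'E, hη'j, _, hη'ge⟩ :=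
        raise (∑ i ∈ Finset.univ.erase j, (y i - s i).toNat) s hs hsj hsi y le_rfl
      set c := Function.update y j (γ j) with hcdef
      have hcE : c ∈ E := by
        apply mem_of_cond_le hγ.1
        intro i
        by_cases hij : i = j
        · subst hij; simp [hcdef]
        · simp [hcdef, Function.update_of_ne hij]; exact hyi i hij
      have : η' ⊓ c = y := by
        funext i
        by_cases hij : i = j
        · subst hij; simp [Pi.inf_apply, hcdef, hη'j, hyj]
        · simp [Pi.inf_apply, hcdef, Function.update_of_ne hij]
          have := hη'ge i hij; omega
      have := hE1 η' hη'E c hcE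
      rwa [‹η' ⊓ c = y›] at this
  have := hγ.2 hγ'
  have := this j
  simp at this
end CanonAux
namespace CanonAux
open GoodSemigroup
variable {I : Type*} [Fintype I] [Nonempty I]

lemma mem_K0_iff {S : Set (I → ℤ)} {τ α : I → ℤ} :
    α ∈ K0 S τ ↔ ∀ s ∈ S, ∀ k, ¬(s k = τ k - α k ∧ ∀ i, i ≠ k → τ i - α i < s i) := by
  constructor
  · intro h s hs k hk
    have hmem : s ∈ delta (τ - α) ∩ S := by
      refine ⟨Set.mem_iUnion.mpr ⟨k, ?_, ?_⟩, hs⟩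
      · intro j hj
        rcases Set.mem_singleton_iff.mp hj with rfl
        simpa using hk.1
      · intro i hi
        have : i ≠ k := by simpa using hi
        simpa using hk.2 i this
    rw [K0, Set.mem_setOf_eq] at h
    rw [h] at hmem
    exact hmem
  · intro h
    rw [K0, Set.mem_setOf_eq, Set.eq_empty_iff_forall_notMem]
    rintro s ⟨hd, hsS⟩
    obtain ⟨k, hk1, hk2⟩ := Set.mem_iUnion.mp hd
    refine h s hsS k ⟨?_, ?_⟩
    · simpa using hk1 k rfl
    · intro i hik
      simpa using hk2 i (by simpa using hik)
  
lemma K0_of_gt {S : Set (I → ℤ)} {τ α : I → ℤ} (hpos : ∀ a ∈ S, 0 ≤ a)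
    (h : ∀ i, τ i < α i) : α ∈ K0 S τ := by
  rw [mem_K0_iff]
  rintro s hs k ⟨h1, _⟩
  have hp : (0:ℤ) ≤ s k := hpos s hs k
  have ht := h k
  have h1' : s k = τ k - α k := h1
  omega

lemma K0_add_mem {S : Set (I → ℤ)} (hadd : ∀ a ∈ S, ∀ b ∈ S, a + b ∈ S)
    {τ α s : I → ℤ} (hα : α ∈ K0 S τ) (hs : s ∈ S) : α + s ∈ K0 S τ := by
  rw [mem_K0_iff] at *
  rintro t ht k ⟨h1, h2⟩
  refine hα (t + s) (hadd t ht s hs) k ⟨?_, ?_⟩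
  · have : t k = τ k - (α k + s k) := by simpa using h1
    simp [Pi.add_apply]; omega
  · intro i hik
    have := h2 i hik
    simp [Pi.add_apply] at this ⊢
    omega

lemma K0_lower {S : Set (I → ℤ)} {γ : I → ℤ} (hγ : IsLeast (cond S) γ)
    {τ α : I → ℤ} (hα : α ∈ K0 S τ) : ∀ j, τ j - γ j < α j := by
  intro j
  by_contra hle
  push_neg at hle
  classical
  set s : I → ℤ := fun i => if i = j then τ j - α j else max (γ i) (τ i - α i + 1) with hsdef
  have hsS : s ∈ S := by
    apply mem_of_cond_le hγ.1
    intro i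
    by_cases hij : i = j
    · subst hij; simp [hsdef]; omega
    · simp [hsdef, hij]
  refine mem_K0_iff.mp hα s hsS j ⟨by simp [hsdef], ?_⟩
  intro i hij
  have hsi : s i = max (γ i) (τ i - α i + 1) := by simp [hsdef, hij]
  rw [hsi]
  have := le_max_right (γ i) (τ i - α i + 1)
  omega

lemma K0_satE1 {S : Set (I → ℤ)} {τ : I → ℤ} : SatE1 (K0 S τ) := by
  intro α hα β hβ
  rw [mem_K0_iff] at *
  rintro t ht k ⟨h1, h2⟩
  rcases le_total (α k) (β k) with hc | hc
  · refine hα t ht k ⟨?_, ?_⟩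
    · have : min (α k) (β k) = α k := by omega
      rw [Pi.inf_apply] at h1; omega
    · intro i hik
      have := h2 i hik
      rw [Pi.inf_apply] at this
      have : τ i - min (α i) (β i) < t i := this
      omega
  · refine hβ t ht k ⟨?_, ?_⟩
    · rw [Pi.inf_apply] at h1; omega
    · intro i hik
      have := h2 i hik
      rw [Pi.inf_apply] at this
      omega

lemma K0_cond_least {S : Set (I → ℤ)} (h0 : (0 : I → ℤ) ∈ S)
    (hpos : ∀ a ∈ S, 0 ≤ a) (τ : I → ℤ) :
    IsLeast (cond (K0 S τ)) (τ + 1) := by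
  classical
  constructor
  · intro w hw
    apply K0_of_gt hpos
    intro i
    have := hw i
    simp at this ⊢
    omega
  · intro c hc
    intro j
    by_contra hle
    push_neg at hle
    simp at hle
    set w : I → ℤ := fun i => if i = j then τ j - c j else max 0 (τ i - c i + 1) with hwdef
    have hw0 : (0 : I → ℤ) ≤ w := by
      intro i
      by_cases hij : i = j
      · subst hij; simp [hwdef]; omega
      · simp [hwdef, hij]
    have hx : c + w ∈ K0 S τ := hc w hw0
    refine mem_K0_iff.mp hx 0 h0 j ⟨?_, ?_⟩
    · simp [hwdef]
    · intro i hij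
      simp [hwdef, hij]
      omega

end CanonAux
namespace CanonAux
variable {I : Type*} [Fintype I] [Nonempty I]
lemma K0_isIdeal {S : Set (I → ℤ)} {γ : I → ℤ} (hγ : IsLeast (cond S) γ)
    (hpos : ∀ a ∈ S, 0 ≤ a) (hadd : ∀ a ∈ S, ∀ b ∈ S, a + b ∈ S) (τ : I → ℤ) :
    IsIdeal S (K0 S τ) := by
  refine ⟨⟨τ + 1, K0_of_gt hpos (by intro i; simp)⟩,
    fun a ha s hs => K0_add_mem hadd ha hs, ?_⟩
  classical
  set a : I → ℤ := fun i => γ i + max 0 (γ i - τ i - 1) with hadef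
  have haS : a ∈ S := by
    apply mem_of_cond_le hγ.1
    intro i; simp [hadef]
  refine ⟨a, haS, fun x hx => ?_⟩
  apply mem_of_cond_le hγ.1
  intro i
  have h1 := K0_lower hγ hx i
  have h2 : γ i - τ i - 1 ≤ max 0 (γ i - τ i - 1) := le_max_right _ _
  simp [hadef, Pi.add_apply]
  omega

end CanonAux
namespace CanonAux
open GoodSemigroup
variable {I : Type*} [Fintype I] [Nonempty I]

/-- Key lemma: if `x ∉ S` then there is `δ` agreeing with `x` at one coordinate,
strictly below elsewhere, with `Δ^S(δ) = ∅`. -/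
lemma L2 (S : Set (I → ℤ)) (h0 : (0 : I → ℤ) ∈ S) (hpos : ∀ a ∈ S, 0 ≤ a)
    (hE1 : SatE1 S) (hE2 : SatE2 S) (x : I → ℤ) (hx : x ∉ S) :
    ∃ (j : I) (δ : I → ℤ), δ j = x j ∧ (∀ i, i ≠ j → δ i < x i) ∧
      ∀ s ∈ S, ∀ k, ¬(s k = δ k ∧ ∀ i, i ≠ k → δ i < s i) := by
  classical
  by_cases hx0 : ∀ i, 0 ≤ x i
  · -- Step 1: choose a coordinate j such that every s ∈ S with s j = x j dips below x
    have step1 : ∃ j, ∀ s ∈ S, s j = x j → ∃ i, i ≠ j ∧ s i < x i := by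
      by_contra hcon
      push_neg at hcon
      choose sfun hsS hsj hsge using hcon
      have key : ∀ T : Finset I, ∃ u ∈ S, (∀ i ∈ T, u i = x i) ∧ x ≤ u := by
        intro T
        induction T using Finset.induction with
        | empty =>
          have j0 : I := Classical.arbitrary I
          refine ⟨sfun j0, hsS j0, by simp, ?_⟩
          intro i
          by_cases hij : i = j0
          · rw [hij]; exact le_of_eq (hsj j0).symm
          · exact hsge j0 i hij
        | @insert q T hq ihT =>
          obtain ⟨u, huS, huT, hux⟩ := ihT
          refine ⟨u ⊓ sfun q, hE1 u huS _ (hsS q), ?_, ?_⟩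
          · intro i hi
            rcases Finset.mem_insert.mp hi with rfl | hi
            · have h1 : x i ≤ u i := hux i
              have h2 : sfun i i = x i := hsj i
              simp [Pi.inf_apply]; omega
            · have h1 : u i = x i := huT i hi
              have h2 : x i ≤ sfun q i := by
                by_cases hiq : i = q
                · rw [hiq]; exact le_of_eq (hsj q).symm
                · exact hsge q i hiq
              simp [Pi.inf_apply]; omega
          · intro i
            have h1 : x i ≤ u i := hux i
            have h2 : x i ≤ sfun q i := by
              by_cases hiq : i = q
              · rw [hiq]; exact le_of_eq (hsj q).symm
              · exact hsge q i hiq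
            simp [Pi.inf_apply]; omega
      obtain ⟨u, huS, huT, _⟩ := key Finset.univ
      have : u = x := funext fun i => huT i (Finset.mem_univ i)
      exact hx (this ▸ huS)
    obtain ⟨j, hjstep⟩ := step1
    have main : ∀ n : ℕ, ∀ (Pr : Finset I) (δ : I → ℤ),
        (Finset.univ \ insert j Pr).card ≤ n →
        δ j = x j →
        (∀ i, i ≠ j → δ i < x i) →
        (¬ ∃ s ∈ S, s j = x j ∧ ∀ i, i ≠ j → δ i < s i) →
        (∀ q ∈ Pr, q ≠ j ∧ (δ q < 0 ∨ ∃ u ∈ S, u j = x j ∧ u q = δ q ∧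
            ∀ i, i ≠ j → i ≠ q → δ i < u i)) →
        ∃ δ' : I → ℤ, δ' j = x j ∧ (∀ i, i ≠ j → δ' i < x i) ∧
          ∀ s ∈ S, ∀ k, ¬(s k = δ' k ∧ ∀ i, i ≠ k → δ' i < s i) := by
      intro n
      induction n with
      | zero =>
        intro Pr δ hcard h1 h2 h3 h4
        refine ⟨δ, h1, h2, ?_⟩
        rintro s hs k ⟨ht1, ht2⟩
        by_cases hkj : k = j
        · subst hkj
          exact h3 ⟨s, hs, by rw [ht1, h1], fun i hij => ht2 i hij⟩
        by_cases hkPr : k ∈ Pr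
        · obtain ⟨hkj', hor⟩ := h4 k hkPr
          rcases hor with hneg | ⟨u, huS, huj, huk, hui⟩
          · have hp : (0:ℤ) ≤ s k := hpos s hs k
            omega
          · obtain ⟨ε, hεS, hεk, hεge, hεeq⟩ := hE2 u huS s hs k (by rw [huk, ht1])
            have hsj' : x j < s j := by
              have := ht2 j (Ne.symm hkj); omega
            have hεj : ε j = x j := by
              have := hεeq j (Ne.symm hkj) (by omega)
              rw [this]; omega
            refine h3 ⟨ε, hεS, hεj, ?_⟩
            intro i hij
            by_cases hik : i = k
            · subst hik; omega
            · have := hεge i hik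
              have h5 : δ i < u i := hui i hij hik
              have h6 : δ i < s i := ht2 i hik
              omega
        · exfalso
          have hkmem : k ∈ Finset.univ \ insert j Pr := by
            simp [hkj, hkPr]
          have := Finset.card_pos.mpr ⟨k, hkmem⟩
          omega
      | succ n ih =>
        intro Pr δ hcard h1 h2 h3 h4
        by_cases hemp : ∀ s ∈ S, ∀ k, ¬(s k = δ k ∧ ∀ i, i ≠ k → δ i < s i)
        · exact ⟨δ, h1, h2, hemp⟩
        push_neg at hemp
        obtain ⟨s, hs, k, ht1, ht2⟩ := hemp
        by_cases hkj : k = j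
        · exfalso
          subst hkj
          exact h3 ⟨s, hs, by rw [ht1, h1], fun i hij => ht2 i hij⟩
        by_cases hkPr : k ∈ Pr
        · exfalso
          obtain ⟨hkj', hor⟩ := h4 k hkPr
          rcases hor with hneg | ⟨u, huS, huj, huk, hui⟩
          · have hp : (0:ℤ) ≤ s k := hpos s hs k
            omega
          · obtain ⟨ε, hεS, hεk, hεge, hεeq⟩ := hE2 u huS s hs k (by rw [huk, ht1])
            have hsj' : x j < s j := by
              have := ht2 j (Ne.symm hkj); omega
            have hεj : ε j = x j := by
              have := hεeq j (Ne.symm hkj) (by omega)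
              rw [this]; omega
            refine h3 ⟨ε, hεS, hεj, ?_⟩
            intro i hij
            by_cases hik : i = k
            · subst hik; omega
            · have := hεge i hik
              have h5 : δ i < u i := hui i hij hik
              have h6 : δ i < s i := ht2 i hik
              omega
        · -- process coordinate k
          have hsj' : x j < s j := by
            have := ht2 j (Ne.symm hkj); omega
          set V : ℤ → Prop := fun v => ∃ u ∈ S, u j = x j ∧ u k = v ∧
            ∀ i, i ≠ j → i ≠ k → δ i < u i with hVdef
          have hVlt : ∀ v, V v → v < δ k := by
            rintro v ⟨u, huS, huj, huk, hui⟩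
            rcases lt_trichotomy v (δ k) with hc | hc | hc
            · exact hc
            · exfalso
              obtain ⟨ε, hεS, hεk, hεge, hεeq⟩ := hE2 u huS s hs k (by rw [huk, hc, ht1])
              have hεj : ε j = x j := by
                have := hεeq j (Ne.symm hkj) (by omega)
                rw [this]; omega
              refine h3 ⟨ε, hεS, hεj, ?_⟩
              intro i hij
              by_cases hik : i = k
              · subst hik; omega
              · have := hεge i hik
                have h5 : δ i < u i := hui i hij hik
                have h6 : δ i < s i := ht2 i hik
                omega
            · exfalso
              refine h3 ⟨u, huS, huj, ?_⟩
              intro i hij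
              by_cases hik : i = k
              · subst hik; omega
              · exact hui i hij hik
          have hcard' : ∀ M : ℤ, (Finset.univ \ insert j (insert k Pr)).card ≤ n := by
            intro _
            have hkmem : k ∈ Finset.univ \ insert j Pr := by simp [hkj, hkPr]
            have hss : Finset.univ \ insert j (insert k Pr) ⊂ Finset.univ \ insert j Pr := by
              constructor
              · intro t ht
                simp at ht ⊢
                tauto
              · intro hsub
                have := hsub hkmem
                simp at this
            have := Finset.card_lt_card hss
            omega
          -- new floor value at k
          by_cases hV : ∃ v, V v
          · obtain ⟨M, hMV, hMub⟩ := Int.exists_greatest_of_bdd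
              ⟨δ k, fun v hv => le_of_lt (hVlt v hv)⟩ hV
            have hMlt : M < δ k := hVlt M hMV
            obtain ⟨u', hu'S, hu'j, hu'k, hu'i⟩ := hMV
            refine ih (insert k Pr) (Function.update δ k M) (hcard' M) ?_ ?_ ?_ ?_
            · rw [Function.update_of_ne (Ne.symm hkj)]; exact h1
            · intro i hij
              by_cases hik : i = k
              · subst hik
                rw [Function.update_self]
                have := h2 i hij; omega
              · rw [Function.update_of_ne hik]; exact h2 i hij
            · rintro ⟨t, htS, htj, hti⟩
              have htV : V (t k) := by
                refine ⟨t, htS, htj, rfl, ?_⟩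
                intro i hij hik
                have := hti i hij
                rwa [Function.update_of_ne hik] at this
              have := hMub (t k) htV
              have := hti k hkj
              rw [Function.update_self] at this
              omega
            · intro q hq
              rcases Finset.mem_insert.mp hq with rfl | hq
              · refine ⟨hkj, Or.inr ⟨u', hu'S, hu'j, ?_, ?_⟩⟩
                · rw [Function.update_self]; exact hu'k
                · intro i hij hik
                  rw [Function.update_of_ne hik]
                  exact hu'i i hij hik
              · obtain ⟨hqj, hor⟩ := h4 q hq
                have hqk : q ≠ k := fun h => hkPr (h ▸ hq)
                refine ⟨hqj, ?_⟩
                rcases hor with hneg | ⟨u, huS, huj, huk, hui⟩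
                · left; rw [Function.update_of_ne hqk]; exact hneg
                · right
                  refine ⟨u, huS, huj, ?_, ?_⟩
                  · rw [Function.update_of_ne hqk]; exact huk
                  · intro i hij hiq
                    by_cases hik : i = k
                    · subst hik
                      rw [Function.update_self]
                      have := hui i hij hiq
                      omega
                    · rw [Function.update_of_ne hik]
                      exact hui i hij hiq
          · refine ih (insert k Pr) (Function.update δ k (min (-1) (δ k - 1)))
              (hcard' 0) ?_ ?_ ?_ ?_
            · rw [Function.update_of_ne (Ne.symm hkj)]; exact h1
            · intro i hij
              by_cases hik : i = k
              · subst hik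
                rw [Function.update_self]
                have := hx0 i; omega
              · rw [Function.update_of_ne hik]; exact h2 i hij
            · rintro ⟨t, htS, htj, hti⟩
              refine hV ⟨t k, t, htS, htj, rfl, ?_⟩
              intro i hij hik
              have := hti i hij
              rwa [Function.update_of_ne hik] at this
            · intro q hq
              rcases Finset.mem_insert.mp hq with rfl | hq
              · refine ⟨hkj, Or.inl ?_⟩
                rw [Function.update_self]; omega
              · obtain ⟨hqj, hor⟩ := h4 q hq
                have hqk : q ≠ k := fun h => hkPr (h ▸ hq)
                refine ⟨hqj, ?_⟩
                rcases hor with hneg | ⟨u, huS, huj, huk, hui⟩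
                · left; rw [Function.update_of_ne hqk]; exact hneg
                · right
                  refine ⟨u, huS, huj, ?_, ?_⟩
                  · rw [Function.update_of_ne hqk]; exact huk
                  · intro i hij hiq
                    by_cases hik : i = k
                    · subst hik
                      rw [Function.update_self]
                      have := hui i hij hiq
                      omega
                    · rw [Function.update_of_ne hik]
                      exact hui i hij hiq
    have hinit : ¬ ∃ s ∈ S, s j = x j ∧ ∀ i, i ≠ j →
        (fun i => if i = j then x j else x i - 1) i < s i := by
      rintro ⟨s, hs, hsj, hsge⟩
      obtain ⟨i, hij, hilt⟩ := hjstep s hs hsj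
      have := hsge i hij
      simp [hij] at this
      omega
    obtain ⟨δ', hd1, hd2, hd3⟩ := main (Finset.univ.card) ∅
      (fun i => if i = j then x j else x i - 1) (by exact Finset.card_le_card Finset.sdiff_subset)
      (by simp) (by intro i hij; simp [hij]) hinit (by simp)
    exact ⟨j, δ', hd1, hd2, hd3⟩
  · -- some coordinate of x is negative
    push_neg at hx0
    obtain ⟨j, hj⟩ := hx0
    refine ⟨j, fun i => if i = j then x j else min (x i) 0 - 1, by simp, ?_, ?_⟩
    · intro i hij; simp [hij]
    · rintro s hs k ⟨ht1, ht2⟩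
      have hp : (0:ℤ) ≤ s k := hpos s hs k
      by_cases hkj : k = j
      · rw [hkj] at ht1 hp; simp at ht1; omega
      · simp [hkj] at ht1; omega

end CanonAux
namespace CanonAux
open GoodSemigroup
variable {I : Type*} [Fintype I] [Nonempty I]

lemma K0_satE2 (S : Set (I → ℤ)) (hpos : ∀ a ∈ S, 0 ≤ a)
    (hE2 : SatE2 S) (τ : I → ℤ) : SatE2 (K0 S τ) := by
  classical
  intro a ha b hb j hab
  set m : I → ℤ := fun i => min (a i) (b i) with hmdef
  have hmj : m j = a j := by simp [hmdef, hab]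
  -- resolving one threat: shared contradiction machinery
  have main : ∀ n : ℕ, ∀ (Pr : Finset I) (δ : I → ℤ),
      (Finset.univ \ Pr).card ≤ n →
      (∀ i, i ≠ j → a i ≠ b i → δ i = τ i - m i) →
      (∀ i, i ≠ j → δ i ≤ τ i - m i) →
      (δ j < τ j - a j) →
      (¬ ∃ s ∈ S, ∃ k, k ≠ j ∧ a k ≠ b k ∧ s k = τ k - m k ∧
        ∀ i, i ≠ k → δ i < s i) →
      (∀ q ∈ Pr, (δ q < 0 ∨ ∃ u ∈ S, ∃ k', k' ≠ j ∧ a k' ≠ b k' ∧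
        u k' = τ k' - m k' ∧ u q = δ q ∧ ∀ i, i ≠ k' → i ≠ q → δ i < u i)) →
      ∃ δ' : I → ℤ, (∀ i, i ≠ j → a i ≠ b i → δ' i = τ i - m i) ∧
        (∀ i, i ≠ j → δ' i ≤ τ i - m i) ∧ (δ' j < τ j - a j) ∧
        ∀ s ∈ S, ∀ k, ¬(s k = δ' k ∧ ∀ i, i ≠ k → δ' i < s i) := by
    intro n
    induction n with
    | zero =>
      intro Pr δ hcard hP1 hP2 hP3 hP4 hP5
      refine ⟨δ, hP1, hP2, hP3, ?_⟩
      rintro s hs k ⟨ht1, ht2⟩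
      by_cases hkD : k ≠ j ∧ a k ≠ b k
      · exact hP4 ⟨s, hs, k, hkD.1, hkD.2, by rw [← hP1 k hkD.1 hkD.2]; exact ht1, ht2⟩
      by_cases hkPr : k ∈ Pr
      · rcases hP5 k hkPr with hneg | ⟨u, huS, k', hk'j, hk'ab, huk', huk, hui⟩
        · have hp : (0:ℤ) ≤ s k := hpos s hs k
          omega
        · have hkk' : k ≠ k' := by
            intro h; exact hkD (h ▸ ⟨hk'j, hk'ab⟩)
          obtain ⟨ε, hεS, hεk, hεge, hεeq⟩ := hE2 u huS s hs k (by rw [huk, ht1])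
          have hδk' : δ k' = τ k' - m k' := hP1 k' hk'j hk'ab
          have hsk' : δ k' < s k' := ht2 k' (Ne.symm hkk')
          have hεk' : ε k' = τ k' - m k' := by
            have := hεeq k' (Ne.symm hkk') (by omega)
            rw [this]; omega
          refine hP4 ⟨ε, hεS, k', hk'j, hk'ab, hεk', ?_⟩
          intro i hik'
          by_cases hik : i = k
          · subst hik; omega
          · have := hεge i hik
            have h6 : δ i < s i := ht2 i hik
            by_cases hiq : i = k'
            · exact absurd hiq hik'
            · have h5 : δ i < u i := hui i hiq hik
              omega
      · exfalso
        have hkmem : k ∈ Finset.univ \ Pr := by simp [hkPr]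
        have := Finset.card_pos.mpr ⟨k, hkmem⟩
        omega
    | succ n ih =>
      intro Pr δ hcard hP1 hP2 hP3 hP4 hP5
      by_cases hemp : ∀ s ∈ S, ∀ k, ¬(s k = δ k ∧ ∀ i, i ≠ k → δ i < s i)
      · exact ⟨δ, hP1, hP2, hP3, hemp⟩
      push_neg at hemp
      obtain ⟨s, hs, k, ht1, ht2⟩ := hemp
      by_cases hkD : k ≠ j ∧ a k ≠ b k
      · exact absurd ⟨s, hs, k, hkD.1, hkD.2,
          by rw [← hP1 k hkD.1 hkD.2]; exact ht1, ht2⟩ hP4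
      by_cases hkPr : k ∈ Pr
      · exfalso
        rcases hP5 k hkPr with hneg | ⟨u, huS, k', hk'j, hk'ab, huk', huk, hui⟩
        · have hp : (0:ℤ) ≤ s k := hpos s hs k
          omega
        · have hkk' : k ≠ k' := by
            intro h; exact hkD (h ▸ ⟨hk'j, hk'ab⟩)
          obtain ⟨ε, hεS, hεk, hεge, hεeq⟩ := hE2 u huS s hs k (by rw [huk, ht1])
          have hδk' : δ k' = τ k' - m k' := hP1 k' hk'j hk'ab
          have hsk' : δ k' < s k' := ht2 k' (Ne.symm hkk')
          have hεk' : ε k' = τ k' - m k' := by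
            have := hεeq k' (Ne.symm hkk') (by omega)
            rw [this]; omega
          refine hP4 ⟨ε, hεS, k', hk'j, hk'ab, hεk', ?_⟩
          intro i hik'
          by_cases hik : i = k
          · subst hik; omega
          · have := hεge i hik
            have h6 : δ i < s i := ht2 i hik
            by_cases hiq : i = k'
            · exact absurd hiq hik'
            · have h5 : δ i < u i := hui i hiq hik
              omega
      · -- process coordinate k
        set V : ℤ → Prop := fun v => ∃ u ∈ S, ∃ k', k' ≠ j ∧ a k' ≠ b k' ∧
          u k' = τ k' - m k' ∧ u k = v ∧ ∀ i, i ≠ k' → i ≠ k → δ i < u i with hVdef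
        have hVlt : ∀ v, V v → v < δ k := by
          rintro v ⟨u, huS, k', hk'j, hk'ab, huk', huk, hui⟩
          have hkk' : k ≠ k' := by
            intro h; exact hkD (h ▸ ⟨hk'j, hk'ab⟩)
          rcases lt_trichotomy v (δ k) with hc | hc | hc
          · exact hc
          · exfalso
            obtain ⟨ε, hεS, hεk, hεge, hεeq⟩ := hE2 u huS s hs k (by rw [huk, hc, ht1])
            have hδk' : δ k' = τ k' - m k' := hP1 k' hk'j hk'ab
            have hsk' : δ k' < s k' := ht2 k' (Ne.symm hkk')
            have hεk' : ε k' = τ k' - m k' := by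
              have := hεeq k' (Ne.symm hkk') (by omega)
              rw [this]; omega
            refine hP4 ⟨ε, hεS, k', hk'j, hk'ab, hεk', ?_⟩
            intro i hik'
            by_cases hik : i = k
            · subst hik; omega
            · have := hεge i hik
              have h6 : δ i < s i := ht2 i hik
              by_cases hiq : i = k'
              · exact absurd hiq hik'
              · have h5 : δ i < u i := hui i hiq hik
                omega
          · exfalso
            refine hP4 ⟨u, huS, k', hk'j, hk'ab, huk', ?_⟩
            intro i hik'
            by_cases hik : i = k
            · subst hik; omega
            · exact hui i hik' hik
        have hcard' : (Finset.univ \ insert k Pr).card ≤ n := by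
          have hkmem : k ∈ Finset.univ \ Pr := by simp [hkPr]
          have hss : Finset.univ \ insert k Pr ⊂ Finset.univ \ Pr := by
            constructor
            · intro t ht
              simp at ht ⊢
              tauto
            · intro hsub
              have := hsub hkmem
              simp at this
          have := Finset.card_lt_card hss
          omega
        have hstep : ∀ M : ℤ, M < δ k →
            (M < 0 ∨ ∃ u ∈ S, ∃ k', k' ≠ j ∧ a k' ≠ b k' ∧ u k' = τ k' - m k' ∧
              u k = M ∧ ∀ i, i ≠ k' → i ≠ k → δ i < u i) →
            (¬ ∃ v, V v ∧ M < v) →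
            ∃ δ' : I → ℤ, (∀ i, i ≠ j → a i ≠ b i → δ' i = τ i - m i) ∧
              (∀ i, i ≠ j → δ' i ≤ τ i - m i) ∧ (δ' j < τ j - a j) ∧
              ∀ s ∈ S, ∀ k, ¬(s k = δ' k ∧ ∀ i, i ≠ k → δ' i < s i) := by
          intro M hMlt hMprot hMmax
          refine ih (insert k Pr) (Function.update δ k M) hcard' ?_ ?_ ?_ ?_ ?_
          · intro i hij hiab
            have hik : i ≠ k := by
              intro h; exact hkD (h ▸ ⟨hij, hiab⟩)
            rw [Function.update_of_ne hik]
            exact hP1 i hij hiab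
          · intro i hij
            by_cases hik : i = k
            · subst hik
              rw [Function.update_self]
              have := hP2 i hij
              omega
            · rw [Function.update_of_ne hik]; exact hP2 i hij
          · by_cases hjk : j = k
            · rw [hjk, Function.update_self]
              rw [hjk] at hP3; omega
            · rw [Function.update_of_ne hjk]; exact hP3
          · rintro ⟨t, htS, k', hk'j, hk'ab, htk', hti⟩
            have hkk' : k ≠ k' := by
              intro h; exact hkD (h ▸ ⟨hk'j, hk'ab⟩)
            refine hMmax ⟨t k, ⟨t, htS, k', hk'j, hk'ab, htk', rfl, ?_⟩, ?_⟩
            · intro i hik' hik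
              have := hti i hik'
              rwa [Function.update_of_ne hik] at this
            · have := hti k hkk'
              rwa [Function.update_self] at this
          · intro q hq
            rcases Finset.mem_insert.mp hq with rfl | hq
            · rcases hMprot with hneg | ⟨u, huS, k', hk'j, hk'ab, huk', huk, hui⟩
              · left; rw [Function.update_self]; exact hneg
              · right
                refine ⟨u, huS, k', hk'j, hk'ab, huk', by
                  rw [Function.update_self]; exact huk, ?_⟩
                intro i hik' hiq
                rw [Function.update_of_ne hiq]
                exact hui i hik' hiq
            · have hqk : q ≠ k := fun h => hkPr (h ▸ hq)
              rcases hP5 q hq with hneg | ⟨u, huS, k', hk'j, hk'ab, huk', huq, hui⟩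
              · left; rw [Function.update_of_ne hqk]; exact hneg
              · right
                refine ⟨u, huS, k', hk'j, hk'ab, huk', by
                  rw [Function.update_of_ne hqk]; exact huq, ?_⟩
                intro i hik' hiq
                by_cases hik : i = k
                · subst hik
                  rw [Function.update_self]
                  have := hui i hik' hiq
                  omega
                · rw [Function.update_of_ne hik]
                  exact hui i hik' hiq
        by_cases hV : ∃ v, V v
        · obtain ⟨M, hMV, hMub⟩ := Int.exists_greatest_of_bdd
            ⟨δ k, fun v hv => le_of_lt (hVlt v hv)⟩ hV
          obtain ⟨u', hu'S, k', hk'j, hk'ab, hu'k', hu'k, hu'i⟩ := hMV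
          refine hstep M (hVlt M ⟨u', hu'S, k', hk'j, hk'ab, hu'k', hu'k, hu'i⟩)
            (Or.inr ⟨u', hu'S, k', hk'j, hk'ab, hu'k', hu'k, hu'i⟩) ?_
          rintro ⟨v, hvV, hvM⟩
          have := hMub v hvV
          omega
        · refine hstep (min (-1) (δ k - 1)) (by omega) (Or.inl (by omega)) ?_
          rintro ⟨v, hvV, _⟩
          exact hV ⟨v, hvV⟩
  -- initial state
  have hP4init : ¬ ∃ s ∈ S, ∃ k, k ≠ j ∧ a k ≠ b k ∧ s k = τ k - m k ∧
      ∀ i, i ≠ k → (fun i => if i = j then τ j - a j - 1 else τ i - m i) i < s i := by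
    rintro ⟨u, huS, k, hkj, hkab, huk, hui⟩
    have huj : τ j - a j - 1 < u j := by
      have := hui j (Ne.symm hkj); simpa using this
    have huge : ∀ i, i ≠ j → i ≠ k → τ i - m i < u i := by
      intro i hij hik
      have := hui i hik
      simpa [hij] using this
    have hma : ∀ i, τ i - a i ≤ τ i - m i := by
      intro i; simp [hmdef]; omega
    have hmb : ∀ i, τ i - b i ≤ τ i - m i := by
      intro i; simp [hmdef]; omega
    rcases lt_or_ge (τ j - a j) (u j) with hc | hc
    · rcases le_or_gt (a k) (b k) with hk | hk
      · have hmk : m k = a k := by simp [hmdef]; omega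
        refine mem_K0_iff.mp ha u huS k ⟨by rw [huk, hmk], ?_⟩
        intro i hik
        by_cases hij : i = j
        · subst hij; omega
        · have := huge i hij hik
          have := hma i
          omega
      · have hmk : m k = b k := by simp [hmdef]; omega
        refine mem_K0_iff.mp hb u huS k ⟨by rw [huk, hmk], ?_⟩
        intro i hik
        by_cases hij : i = j
        · subst hij; rw [← hab]; omega
        · have := huge i hij hik
          have := hmb i
          omega
    · have hujeq : u j = τ j - a j := by omega
      rcases lt_or_ge (a k) (b k) with hk | hk
      · have hmk : m k = a k := by simp [hmdef]; omega
        refine mem_K0_iff.mp hb u huS j ⟨by rw [hujeq, hab], ?_⟩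
        intro i hij
        by_cases hik : i = k
        · subst hik; rw [huk, hmk]; omega
        · have := huge i hij hik
          have := hmb i
          omega
      · have hmk : m k = b k := by
          simp [hmdef]
          have : a k ≠ b k := hkab
          omega
        refine mem_K0_iff.mp ha u huS j ⟨hujeq, ?_⟩
        intro i hij
        by_cases hik : i = k
        · subst hik; rw [huk, hmk]
          omega
        · have := huge i hij hik
          have := hma i
          omega
  obtain ⟨δ', hQ1, hQ2, hQ3, hQ4⟩ := main (Finset.univ.card) ∅
    (fun i => if i = j then τ j - a j - 1 else τ i - m i)
    (by exact Finset.card_le_card Finset.sdiff_subset)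
    (by intro i hij _; simp [hij])
    (by intro i hij; simp [hij])
    (by simp)
    hP4init
    (by simp)
  refine ⟨fun i => τ i - δ' i, ?_, ?_, ?_, ?_⟩
  · rw [mem_K0_iff]
    rintro s hs k ⟨h1, h2⟩
    refine hQ4 s hs k ⟨by simpa using h1, ?_⟩
    intro i hik
    have := h2 i hik
    simpa using this
  · simp only []
    omega
  · intro i hij
    have := hQ2 i hij
    simp [hmdef] at this ⊢
    omega
  · intro i hij hiab
    have := hQ1 i hij hiab
    simp [hmdef] at this ⊢
    omega

end CanonAux
namespace CanonAux
open GoodSemigroup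
variable {I : Type*} [Fintype I] [Nonempty I]

/-- translate of a set -/
def Tset (v : I → ℤ) (E : Set (I → ℤ)) : Set (I → ℤ) := {y | y + v ∈ E}

lemma mem_Tset {v : I → ℤ} {E : Set (I → ℤ)} {y : I → ℤ} :
    y ∈ Tset v E ↔ y + v ∈ E := Iff.rfl

lemma satE1_Tset {v : I → ℤ} {E : Set (I → ℤ)} (h : SatE1 E) : SatE1 (Tset v E) := by
  intro a ha b hb
  have := h _ ha _ hb
  have e : (a + v) ⊓ (b + v) = a ⊓ b + v := by
    funext i; simp only [Pi.add_apply, Pi.inf_apply]; omega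
  rw [mem_Tset, ← e]
  exact this

lemma satE2_Tset {v : I → ℤ} {E : Set (I → ℤ)} (h : SatE2 E) : SatE2 (Tset v E) := by
  intro a ha b hb j hab
  obtain ⟨ε, hε, h1, h2, h3⟩ := h _ ha _ hb j (by simp [Pi.add_apply, hab])
  refine ⟨ε - v, ?_, ?_, ?_, ?_⟩
  · rw [mem_Tset]; simpa using hε
  · have := h1; simp only [Pi.add_apply, Pi.sub_apply] at *; omega
  · intro i hij
    have := h2 i hij
    simp only [Pi.add_apply, Pi.sub_apply] at *
    omega
  · intro i hij hne
    have := h3 i hij (by simp only [Pi.add_apply]; intro hcon; exact hne (by omega))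
    simp only [Pi.add_apply, Pi.sub_apply] at *
    omega

lemma cond_Tset {v : I → ℤ} {E : Set (I → ℤ)} {x : I → ℤ} :
    x ∈ cond (Tset v E) ↔ x + v ∈ cond E := by
  constructor
  · intro h w hw
    have := h w hw
    rw [mem_Tset] at this
    have e : x + w + v = x + v + w := by ring
    rwa [← e]
  · intro h w hw
    rw [mem_cond] at h
    have := h w hw
    rw [mem_Tset]
    have e : x + w + v = x + v + w := by ring
    rwa [e]

lemma isLeast_cond_Tset {v : I → ℤ} {E : Set (I → ℤ)} {γ : I → ℤ} :
    IsLeast (cond (Tset v E)) γ ↔ IsLeast (cond E) (γ + v) := by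
  constructor
  · rintro ⟨h1, h2⟩
    refine ⟨cond_Tset.mp h1, ?_⟩
    intro c hc
    have : c - v ∈ cond (Tset v E) := by
      rw [cond_Tset]; simpa using hc
    have := h2 this
    intro i
    have := this i
    simp only [Pi.sub_apply, Pi.add_apply] at *
    omega
  · rintro ⟨h1, h2⟩
    refine ⟨cond_Tset.mpr h1, ?_⟩
    intro c hc
    have := h2 (cond_Tset.mp hc)
    intro i
    have := this i
    simp only [Pi.add_apply] at *
    omega

lemma Tset_Tset {v : I → ℤ} {E : Set (I → ℤ)} : Tset (-v) (Tset v E) = E := by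
  ext y
  rw [mem_Tset, mem_Tset]
  have e : y + -v + v = y := by ring
  rw [e]

lemma Tset_Tset' {v : I → ℤ} {E : Set (I → ℤ)} : Tset v (Tset (-v) E) = E := by
  ext y
  rw [mem_Tset, mem_Tset]
  have e : y + v + -v = y := by ring
  rw [e]

lemma isIdeal_of_bounded {S : Set (I → ℤ)} {γ : I → ℤ} (hγ : IsLeast (cond S) γ)
    (E : Set (I → ℤ)) (hne : E.Nonempty) (hadd : ∀ a ∈ E, ∀ s ∈ S, a + s ∈ E)
    (B : I → ℤ) (hB : ∀ a ∈ E, B ≤ a) : IsIdeal S E := by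
  classical
  refine ⟨hne, hadd, ⟨fun i => max (γ i) (γ i - B i), ?_, ?_⟩⟩
  · apply mem_of_cond_le hγ.1
    intro i
    exact le_max_left _ _
  · intro x hx
    apply mem_of_cond_le hγ.1
    intro i
    have h1 : B i ≤ x i := hB x hx i
    have h2 : γ i - B i ≤ max (γ i) (γ i - B i) := le_max_right _ _
    show γ i ≤ (max (γ i) (γ i - B i)) + x i
    omega

lemma goodIdeal_Tset {S : Set (I → ℤ)} {γ : I → ℤ} (hγ : IsLeast (cond S) γ)
    (hpos : ∀ a ∈ S, 0 ≤ a) {E : Set (I → ℤ)} (hE : IsGoodIdeal S E) (v : I → ℤ) :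
    IsGoodIdeal S (Tset v E) := by
  obtain ⟨⟨⟨e0, he0⟩, hadd, ⟨α, hαS, hα⟩⟩, hE1, hE2⟩ := hE
  refine ⟨?_, satE1_Tset hE1, satE2_Tset hE2⟩
  refine isIdeal_of_bounded hγ _ ⟨e0 - v, ?_⟩ ?_ (-α - v) ?_
  · rw [mem_Tset]; simpa using he0
  · intro a ha s hs
    rw [mem_Tset] at ha ⊢
    have e : a + s + v = (a + v) + s := by ring
    rw [e]
    exact hadd _ ha s hs
  · intro a ha
    rw [mem_Tset] at ha
    have := hpos _ (hα _ ha)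
    intro i
    have := this i
    simp only [Pi.add_apply, Pi.sub_apply, Pi.neg_apply, Pi.zero_apply] at *
    omega

lemma canonical_Tset {S : Set (I → ℤ)} {γ : I → ℤ} (hγ : IsLeast (cond S) γ)
    (hpos : ∀ a ∈ S, 0 ≤ a) {K : Set (I → ℤ)} (hK : IsCanonicalIdeal S K) (v : I → ℤ) :
    IsCanonicalIdeal S (Tset v K) := by
  refine ⟨goodIdeal_Tset hγ hpos hK.1 v, ?_⟩
  intro E γ₀ hEgood hsub hlK' hlE
  have hKE : K ⊆ Tset (-v) E := by
    intro k hk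
    rw [mem_Tset]
    have : k + -v ∈ Tset v K := by
      rw [mem_Tset]
      have e : k + -v + v = k := by ring
      rwa [e]
    exact hsub this
  have h1 : IsLeast (cond K) (γ₀ + v) := isLeast_cond_Tset.mp hlK'
  have h2 : IsLeast (cond (Tset (-v) E)) (γ₀ + v) := by
    rw [isLeast_cond_Tset]
    have e : γ₀ + v + -v = γ₀ := by ring
    rwa [e]
  have := hK.2 (Tset (-v) E) (γ₀ + v) (goodIdeal_Tset hγ hpos hEgood (-v)) hKE h1 h2
  rw [this, Tset_Tset']

lemma sub_Tset {K : Set (I → ℤ)} {v : I → ℤ} :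
    sub (Tset v K) (Tset v K) = sub K K := by
  ext x
  constructor
  · intro h g hg
    have : x + (g - v) ∈ Tset v K := h (g - v) (by rw [mem_Tset]; simpa using hg)
    rw [mem_Tset] at this
    have e : x + (g - v) + v = x + g := by ring
    rwa [e] at this
  · intro h f hf
    rw [mem_Tset] at hf ⊢
    have : x + (f + v) ∈ K := h (f + v) hf
    have e : x + f + v = x + (f + v) := by ring
    rwa [e]

lemma sub_K0_self (S : Set (I → ℤ)) (h0 : (0 : I → ℤ) ∈ S)
    (hpos : ∀ a ∈ S, 0 ≤ a) (hadd : ∀ a ∈ S, ∀ b ∈ S, a + b ∈ S)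
    (hE1 : SatE1 S) (hE2 : SatE2 S) (τ : I → ℤ) :
    sub (K0 S τ) (K0 S τ) = S := by
  ext x
  constructor
  · intro h
    by_contra hx
    obtain ⟨j, δ, hδj, hδi, hδemp⟩ := L2 S h0 hpos hE1 hE2 x hx
    have hβ : (fun i => τ i - δ i) ∈ K0 S τ := by
      rw [mem_K0_iff]
      rintro s hs k ⟨h1, h2⟩
      refine hδemp s hs k ⟨by simpa using h1, ?_⟩
      intro i hik
      have := h2 i hik
      simpa using this
    have hxβ : x + (fun i => τ i - δ i) ∈ K0 S τ := h _ hβ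
    refine mem_K0_iff.mp hxβ 0 h0 j ⟨?_, ?_⟩
    · simp [Pi.add_apply]
      omega
    · intro i hij
      have := hδi i hij
      simp [Pi.add_apply]
      omega
  · intro hx f hf
    have := K0_add_mem hadd hf hx
    rwa [add_comm] at this

end CanonAux
/-- Theorem 45 (d) and (h): a canonical ideal `K` satisfies `K − K = S`, and if
`S ⊆ K ⊆ ℕ^I` then `K = K⁰_S`. -/
theorem canonical_sub_self_and_normalized {I : Type*} [Fintype I] [Nonempty I]
    (S : Set (I → ℤ)) (hS : IsGood S) (γS : I → ℤ) (hγS : IsLeast (cond S) γS)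
    (K : Set (I → ℤ)) (hK : IsCanonicalIdeal S K) :
    sub K K = S ∧
    (S ⊆ K → K ⊆ {x : I → ℤ | 0 ≤ x} → K = K0 S (γS - 1)) := by
  classical
  obtain ⟨h0, hadd, hpos, -, hE1S, hE2S⟩ := hS
  have part2 : ∀ K' : Set (I → ℤ), IsCanonicalIdeal S K' → S ⊆ K' →
      K' ⊆ {x : I → ℤ | 0 ≤ x} → K' = K0 S (γS - 1) := by
    intro K' hK' hSK hKN
    obtain ⟨⟨hKne, hKadd, hKbd⟩, hKE1, hKE2⟩ := hK'.1
    have hKpos : ∀ k ∈ K', (0 : I → ℤ) ≤ k := fun k hk => hKN hk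
    have hcne : (cond K').Nonempty := ⟨γS, CanonAux.cond_mono hSK hγS.1⟩
    have hcb : ∀ c ∈ cond K', (0 : I → ℤ) ≤ c := by
      intro c hc
      have h9 : c + 0 ∈ K' := hc 0 (by simp only [Set.mem_setOf_eq]; exact le_rfl)
      rw [add_zero] at h9
      exact hKpos c h9
    obtain ⟨γ', hγ'⟩ := CanonAux.exists_least_of_E1 (cond K') hcne
      (CanonAux.satE1_cond hKE1) 0 hcb
    have hKsub : K' ⊆ K0 S (γ' - 1) := by
      intro k hk
      rw [CanonAux.mem_K0_iff]
      rintro s hs i ⟨h1, h2⟩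
      simp only [Pi.sub_apply, Pi.one_apply] at h1 h2
      refine CanonAux.lemmaA K' hKE1 hKE2 γ' hγ' i (k + s) (hKadd k hk s hs) ?_ ?_
      · show k i + s i = γ' i - 1
        omega
      · intro l hl
        have h3 := h2 l hl
        show γ' l ≤ k l + s l
        omega
    have hK0good : IsGoodIdeal S (K0 S (γ' - 1)) :=
      ⟨CanonAux.K0_isIdeal hγS hpos hadd _, CanonAux.K0_satE1,
        CanonAux.K0_satE2 S hpos hE2S _⟩
    have hK0least : IsLeast (cond (K0 S (γ' - 1))) γ' := by
      have h9 := CanonAux.K0_cond_least (S := S) h0 hpos (γ' - 1)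
      have e : γ' - 1 + 1 = γ' := by ring
      rwa [e] at h9
    have hKeq : K' = K0 S (γ' - 1) := hK'.2 (K0 S (γ' - 1)) γ' hK0good hKsub hγ' hK0least
    have hle : γ' ≤ γS := hγ'.2 (CanonAux.cond_mono hSK hγS.1)
    have hxK : γ' - γS ∈ K0 S (γ' - 1) := by
      rw [CanonAux.mem_K0_iff]
      rintro s hs i ⟨h1, h2⟩
      simp only [Pi.sub_apply, Pi.one_apply] at h1 h2
      refine CanonAux.lemmaA S hE1S hE2S γS hγS i s hs (by omega) ?_
      intro l hl
      have h3 := h2 l hl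
      omega
    rw [← hKeq] at hxK
    have hge : γS ≤ γ' := by
      have h9 : (0 : I → ℤ) ≤ γ' - γS := hKN hxK
      exact sub_nonneg.mp h9
    have hγeq : γ' = γS := le_antisymm hle hge
    rw [hKeq, hγeq]
  constructor
  · obtain ⟨⟨⟨e0, he0⟩, hKadd, ⟨α, hαS, hα⟩⟩, hKE1, hKE2⟩ := hK.1
    have hbd : ∀ k ∈ K, -α ≤ k := by
      intro k hk i
      have h9 : (0 : I → ℤ) ≤ α + k := hpos _ (hα k hk)
      have h8 := h9 i
      simp only [Pi.add_apply, Pi.zero_apply] at h8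
      simp only [Pi.neg_apply]
      omega
    obtain ⟨μ, hμ⟩ := CanonAux.exists_least_of_E1 K ⟨e0, he0⟩ hKE1 (-α) hbd
    have hScan : IsCanonicalIdeal S (CanonAux.Tset μ K) :=
      CanonAux.canonical_Tset hγS hpos hK μ
    have hSsub : S ⊆ CanonAux.Tset μ K := by
      intro s hs
      rw [CanonAux.mem_Tset, add_comm]
      exact hKadd μ hμ.1 s hs
    have hTN : CanonAux.Tset μ K ⊆ {x : I → ℤ | 0 ≤ x} := by
      intro y hy
      rw [CanonAux.mem_Tset] at hy
      have h9 := hμ.2 hy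
      show (0 : I → ℤ) ≤ y
      intro i
      have h8 := h9 i
      simp only [Pi.add_apply, Pi.zero_apply] at h8 ⊢
      omega
    have hTeq := part2 _ hScan hSsub hTN
    calc sub K K = sub (CanonAux.Tset μ K) (CanonAux.Tset μ K) := (CanonAux.sub_Tset).symm
      _ = sub (K0 S (γS - 1)) (K0 S (γS - 1)) := by rw [hTeq]
      _ = S := CanonAux.sub_K0_self S h0 hpos hadd hE1S hE2S _
  · intro hSK hKN
    exact part2 K hK hSK hKN
end
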